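/- arXiv:2112.13584 — 10 statements merged into one kernel-verified Lean document; each statement's English description precedes it below -/
import Mathlib

section
/- For n > k ≥ 0, the coefficient of x^n in x^k · C(x) · (1 + x/sqrt(1-4x)) equals ((n-k+3)/2)·C_{n-k}, where C_m is the m-th Catalan number; for n = k the coefficient is 1. -/
open PowerSeries

/-- The Catalan generating function C(x) = Σ_{n≥0} C_n x^n. -/
noncomputable def catalanGF : PowerSeries ℚ := PowerSeries.mk fun n => (catalan n : ℚ)

/-- The series 1/sqrt(1-4x) = Σ_{n≥0} binom(2n,n) x^n. -/
noncomputable def invSqrtGF : PowerSeries ℚ := PowerSeries.mk fun n => ((2 * n).choose n : ℚ)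

/-!
Since `binom(2j, j) = (j + 1) C_j`, adding the convolution `Σ_{i+j=n} C_i binom(2j, j)` to its
mirror image gives `Σ_{i+j=n} (i + j + 2) C_i C_j = (n + 2) C_{n+1}`. Hence the coefficient of
`x^{m+1}` in `C(x) · x / sqrt(1-4x)` is `(m + 2) C_{m+1} / 2`, and the factor `x^k` only shifts
coefficients by `k`.
-/

open Finset in
theorem two_mul_sum_catalan_mul_centralBinom (n : ℕ) :
    2 * ∑ ij ∈ antidiagonal n, catalan ij.1 * ij.2.centralBinom = (n + 2) * catalan (n + 1) := by
  have hmirror : ∑ ij ∈ antidiagonal n, catalan ij.1 * ij.2.centralBinom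
      = ∑ ij ∈ antidiagonal n, catalan ij.2 * ij.1.centralBinom :=
    (Nat.sum_antidiagonal_swap (f := fun ij => catalan ij.1 * ij.2.centralBinom)).symm
  rw [two_mul]
  nth_rw 2 [hmirror]
  rw [← sum_add_distrib, catalan_succ', mul_sum]
  refine sum_congr rfl fun ij hij => ?_
  rw [HasAntidiagonal.mem_antidiagonal] at hij
  rw [← succ_mul_catalan_eq_centralBinom, ← succ_mul_catalan_eq_centralBinom, ← hij]
  ring

theorem coeff_catalanGF_mul_invSqrtGF (n : ℕ) :
    coeff n (catalanGF * invSqrtGF) = ((n : ℚ) + 2) * catalan (n + 1) / 2 := by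
  have hsum := congrArg (Nat.cast (R := ℚ)) (two_mul_sum_catalan_mul_centralBinom n)
  push_cast at hsum
  simp only [coeff_mul, catalanGF, invSqrtGF, coeff_mk, ← Nat.centralBinom_eq_two_mul_choose]
  linarith

theorem coeff_zero_catalanGF_mul : coeff 0 (catalanGF * (1 + X * invSqrtGF)) = 1 := by
  simp [catalanGF]

theorem coeff_succ_catalanGF_mul (m : ℕ) :
    coeff (m + 1) (catalanGF * (1 + X * invSqrtGF)) = ((m : ℚ) + 4) / 2 * catalan (m + 1) := by
  rw [mul_add, mul_one, mul_left_comm, map_add, coeff_succ_X_mul, coeff_catalanGF_mul_invSqrtGF]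
  simp only [catalanGF, coeff_mk]
  ring

/-- For n > k the coefficient of x^n in x^k·C(x)·(1 + x/sqrt(1-4x)) equals
((n-k+3)/2)·C_{n-k}; for n = k the coefficient is 1. -/
theorem coeff_sym_peak_gf (n k : ℕ) (h : k ≤ n) :
    (k < n →
      PowerSeries.coeff n ((X : PowerSeries ℚ) ^ k * catalanGF * (1 + X * invSqrtGF))
        = (((n : ℚ) - k + 3) / 2) * (catalan (n - k) : ℚ)) ∧
    (n = k →
      PowerSeries.coeff n ((X : PowerSeries ℚ) ^ k * catalanGF * (1 + X * invSqrtGF)) = 1) := by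
  obtain ⟨m, rfl⟩ := Nat.exists_eq_add_of_le' h
  rw [mul_assoc, coeff_X_pow_mul]
  refine ⟨fun hlt => ?_, fun heq => ?_⟩
  · obtain ⟨j, rfl⟩ := Nat.exists_eq_add_of_lt (Nat.lt_add_left_iff_pos.mp hlt)
    rw [Nat.add_sub_cancel, coeff_succ_catalanGF_mul]
    push_cast
    ring
  · rw [Nat.add_eq_right.mp heq, coeff_zero_catalanGF_mul]
end

section
/- For n ≥ k ≥ 0, the coefficient of x^n in x^k·(1 + x/sqrt(1-4x))·C(x)^{k+1} equals ((k+1)/(n+1) + (n-k)/(2n-k))·binom(2n-k, n). -/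
/-!
Write `C = catalanGF` and `S = invSqrtGF`. For any series `P`, the identity `C = 1 + X C²` gives
`P C^(j+1) = P C^j + X P C^(j+2)`, so `a m j = [x^m] P C^j` obeys the Pascal-type recurrence
`a (m+1) (j+1) = a (m+1) j + a m (j+2)`, which determines `a` from the coefficients of `P` and its
constant term. `binom(2m+j, m)` satisfies it with `P = S`, and the ballot numbers
`binom(2m+j, m) - binom(2m+j, m-1) = (j+1)/(m+j+1) binom(2m+j, m)` satisfy it with `P = C`.
The coefficient in question is `[x^m] C^(k+1) + [x^(m-1)] S C^(k+1)` with `m = n - k`.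
-/

open PowerSeries

theorem coeff_mul_pow_of_eq_one_add_X_mul_sq {R : Type*} [CommSemiring R] {c P : R⟦X⟧}
    (hc : c = 1 + X * c ^ 2) {g : ℕ → ℕ → R}
    (hrec : ∀ m j, g (m + 1) (j + 1) = g (m + 1) j + g m (j + 2))
    (hcol : ∀ m, g m 0 = coeff m P) (hrow : ∀ j, g 0 j = constantCoeff P) (m j : ℕ) :
    coeff m (P * c ^ j) = g m j := by
  have hc0 : constantCoeff c = 1 := by rw [hc]; simp
  have hstep (j : ℕ) : P * c ^ (j + 1) = P * c ^ j + X * (P * c ^ (j + 2)) :=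
    calc P * c ^ (j + 1) = P * c ^ j * c := by ring
      _ = P * c ^ j * (1 + X * c ^ 2) := by rw [← hc]
      _ = P * c ^ j + X * (P * c ^ (j + 2)) := by ring
  induction m generalizing j with
  | zero => simp [hc0, hrow]
  | succ m ih =>
    induction j with
    | zero => simp [hcol]
    | succ j ihj => rw [hstep, map_add, coeff_succ_X_mul, ihj, ih, hrec]

theorem catalanGF_eq_one_add_X_mul_sq : catalanGF = 1 + X * catalanGF ^ 2 := by
  ext m
  rcases m with _ | m
  · simp [catalanGF]
  · rw [map_add, coeff_succ_X_mul]
    simp [catalanGF, pow_two, coeff_mul, catalan_succ']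

theorem cast_choose_sub_cast_choose_eq_ballot (m j : ℕ) :
    ((2 * m + j).choose m : ℚ) - (2 * m + j).choose (m + j + 1)
      = (j + 1) / (m + j + 1) * (2 * m + j).choose m := by
  rcases m with _ | m
  · field_simp
    simp
  · have hsymm : (2 * (m + 1) + j).choose (m + 1 + j + 1) = (2 * (m + 1) + j).choose m := by
      rw [Nat.choose_symm_of_eq_add]; ring
    have hsucc := Nat.choose_succ_right_eq (2 * (m + 1) + j) m
    rw [show 2 * (m + 1) + j - m = m + j + 2 by omega] at hsucc
    rw [hsymm]
    field_simp
    have : ((2 * (m + 1) + j).choose (m + 1) : ℚ) * (m + 1)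
        = (2 * (m + 1) + j).choose m * (m + j + 2) := by exact_mod_cast hsucc
    push_cast at this ⊢
    linear_combination this

theorem coeff_invSqrtGF_mul_catalanGF_pow (m j : ℕ) :
    coeff m (invSqrtGF * catalanGF ^ j) = (2 * m + j).choose m := by
  refine coeff_mul_pow_of_eq_one_add_X_mul_sq catalanGF_eq_one_add_X_mul_sq
    (g := fun m j => ((2 * m + j).choose m : ℚ)) (fun m j => ?_)
    (fun m => by simp [invSqrtGF]) (fun j => by simp [invSqrtGF]) m j
  rw [show 2 * (m + 1) + (j + 1) = (2 * m + j + 2) + 1 by ring, Nat.choose_succ_succ']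
  push_cast
  ring_nf

theorem coeff_catalanGF_pow_succ (m j : ℕ) :
    coeff m (catalanGF ^ (j + 1)) = (j + 1) / (m + j + 1) * (2 * m + j).choose m := by
  rw [← cast_choose_sub_cast_choose_eq_ballot, pow_succ']
  refine coeff_mul_pow_of_eq_one_add_X_mul_sq catalanGF_eq_one_add_X_mul_sq
    (g := fun m j => ((2 * m + j).choose m : ℚ) - (2 * m + j).choose (m + j + 1)) (fun m j => ?_)
    (fun m => ?_) (fun j => by simp [catalanGF]) m j
  · rw [show 2 * (m + 1) + (j + 1) = (2 * m + j + 2) + 1 by ring, Nat.choose_succ_succ',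
      Nat.choose_succ_succ' (2 * m + j + 2)]
    push_cast
    ring_nf
  · have h := succ_mul_catalan_eq_centralBinom m
    rw [Nat.centralBinom_eq_two_mul_choose] at h
    rw [cast_choose_sub_cast_choose_eq_ballot, catalanGF, coeff_mk, add_zero, ← h]
    push_cast
    field_simp
    ring

/-- For n ≥ k ≥ 0, the coefficient of x^n in x^k·(1 + x/sqrt(1-4x))·C(x)^{k+1}
equals ((k+1)/(n+1) + (n-k)/(2n-k))·binom(2n-k, n). -/
theorem coeff_F_gf (n k : ℕ) (h : k ≤ n) :
    PowerSeries.coeff (R := ℚ) n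
        ((X : PowerSeries ℚ) ^ k * (1 + X * invSqrtGF) * catalanGF ^ (k + 1))
      = (((k : ℚ) + 1) / ((n : ℚ) + 1) + ((n : ℚ) - (k : ℚ)) / (2 * (n : ℚ) - (k : ℚ)))
          * ((2 * n - k).choose n : ℚ) := by
  obtain ⟨m, rfl⟩ := Nat.exists_eq_add_of_le h
  have hsplit : (X : ℚ⟦X⟧) ^ k * (1 + X * invSqrtGF) * catalanGF ^ (k + 1)
      = X ^ k * (catalanGF ^ (k + 1) + X * (invSqrtGF * catalanGF ^ (k + 1))) := by ring
  rw [hsplit, add_comm k m, coeff_X_pow_mul, map_add, coeff_catalanGF_pow_succ,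
    show 2 * (m + k) - k = 2 * m + k by omega,
    Nat.choose_symm_of_eq_add (show 2 * m + k = (m + k) + m by ring)]
  rcases m with _ | m
  · simp
  · rw [coeff_succ_X_mul, coeff_invSqrtGF_mul_catalanGF_pow]
    have hpred : ((2 * m + k + 1 + 1 : ℕ) : ℚ) * (2 * m + k + 1).choose m
        = (2 * m + k + 1 + 1).choose (m + 1) * (m + 1) := by
      exact_mod_cast Nat.add_one_mul_choose_eq (2 * m + k + 1) m
    rw [show 2 * m + (k + 1) = 2 * m + k + 1 by ring,
      show 2 * (m + 1) + k = 2 * m + k + 1 + 1 by ring]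
    push_cast at hpred ⊢
    rw [show (m : ℚ) + 1 + k - k = m + 1 by ring,
      show 2 * ((m : ℚ) + 1 + k) - k = 2 * m + k + 2 by ring]
    field_simp
    linear_combination ((m : ℚ) + k + 2) * hpred
end

section
/- For n ≥ k ≥ 0, the coefficient of x^n in x^k·C(x)^{k+1}/sqrt(1-4x) equals binom(2n-k+1, n-k). -/
open PowerSeries

theorem catalanGF_pow_succ_mul (j : ℕ) (f : PowerSeries ℚ) :
    catalanGF ^ (j + 1) * f = catalanGF ^ j * f + X * (catalanGF ^ (j + 2) * f) := by
  calc catalanGF ^ (j + 1) * f = catalanGF ^ j * (1 + X * catalanGF ^ 2) * f := by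
        rw [pow_succ, ← catalanGF_eq_one_add_X_mul_sq]
    _ = catalanGF ^ j * f + X * (catalanGF ^ (j + 2) * f) := by ring

theorem coeff_catalanGF_pow_mul_invSqrtGF (m j : ℕ) :
    coeff m (catalanGF ^ j * invSqrtGF) = ((2 * m + j).choose m : ℚ) := by
  induction m generalizing j with
  | zero => simp [catalanGF, invSqrtGF]
  | succ m ihm =>
    induction j with
    | zero => simp [invSqrtGF]
    | succ j ihj =>
      have pascal : (2 * (m + 1) + (j + 1)).choose (m + 1)
          = (2 * (m + 1) + j).choose (m + 1) + (2 * m + (j + 2)).choose m := by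
        rw [show 2 * m + (j + 2) = 2 * (m + 1) + j by ring, add_comm (Nat.choose _ _)]
        exact Nat.choose_succ_succ' _ _
      rw [catalanGF_pow_succ_mul, map_add, coeff_succ_X_mul, ihj, ihm, pascal, Nat.cast_add]

/-- For n ≥ k ≥ 0, the coefficient of x^n in x^k·C(x)^{k+1}/sqrt(1-4x)
equals binom(2n-k+1, n-k). -/
theorem coeff_E_gf (n k : ℕ) (h : k ≤ n) :
    PowerSeries.coeff (R := ℚ) n ((X : PowerSeries ℚ) ^ k * catalanGF ^ (k + 1) * invSqrtGF)
      = ((2 * n - k + 1).choose (n - k) : ℚ) := by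
  obtain ⟨m, rfl⟩ := Nat.exists_eq_add_of_le h
  rw [mul_assoc, add_comm k m, coeff_X_pow_mul, coeff_catalanGF_pow_mul_invSqrtGF,
    Nat.add_sub_cancel]
  congr 2
  omega
end

section
/- The total number of symmetric peaks over all Dyck paths of length 2(n+1) equals 1 + Σ_{i=1}^{n} ((i+3)/2)·C_i, where C_i is the i-th Catalan number. -/
/-- A path (`true` = up step, `false` = down step) never goes below the x-axis. -/
def DyckNonneg (p : List Bool) : Prop :=
  ∀ q : List Bool, q <+: p → q.count false ≤ q.count true

/-- `p` is a Dyck path: never below the x-axis and ends on the x-axis. -/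
def IsDyck (p : List Bool) : Prop :=
  DyckNonneg p ∧ p.count true = p.count false

/-- Dyck paths of length `m` together with a distinguished symmetric peak:
a decomposition `A ++ u^a ++ d^a ++ B` with `a ≥ 1`, where the run `u^a` is maximal
(`A` does not end with an up step) and the run `d^a` is maximal
(`B` does not start with a down step). -/
def SymPeakMarked (m : ℕ) : Type :=
  { q : List Bool × ℕ × List Bool //
      1 ≤ q.2.1 ∧
      q.1.getLast? ≠ some true ∧
      q.2.2.head? ≠ some false ∧
      IsDyck (q.1 ++ List.replicate q.2.1 true ++ List.replicate q.2.1 false ++ q.2.2) ∧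
      (q.1 ++ List.replicate q.2.1 true ++ List.replicate q.2.1 false ++ q.2.2).length = m }

/-!
Lowering a symmetric peak `u^a d^a` with `a ≥ 2` by one level gives a symmetric peak of a path
two steps shorter, while a symmetric peak `ud` of height one is determined by the place where it
sits: a splitting `A ++ B` of the shorter path with `A` not ending in `u` and `B` not starting
with `d`. Such a place is one of the two ends of the path or one of its valleys.

Swapping `du` into `ud` maps the valleys bijectively onto the peaks off the x-axis. A peak on the
x-axis splits its path into two Dyck paths, so paths of semilength `m + 1` have `C (m + 1)` of
them, and since a peak `ud` can be inserted at any of the `2m + 1` positions of a path of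
semilength `m`, they have `(2m + 1) C m` peaks in all. Hence they have
`2 C (m + 1) + (2m + 1) C m - C (m + 1) = (m + 4) C (m + 1) / 2` places, and summing over `m`
gives the formula.
-/

open List

namespace List

variable {α : Type*}

theorem forall_prefix_cons_iff {a : α} {l : List α} {P : List α → Prop} :
    (∀ q, q <+: a :: l → P q) ↔ P [] ∧ ∀ q, q <+: l → P (a :: q) := by
  refine ⟨fun h => ⟨h _ nil_prefix, fun q hq => h _ (cons_prefix_cons.2 ⟨rfl, hq⟩)⟩, ?_⟩
  rintro ⟨h₀, h⟩ q hq
  rcases prefix_cons_iff.1 hq with rfl | ⟨t, rfl, ht⟩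
  exacts [h₀, h t ht]

theorem forall_prefix_append_iff {l₁ l₂ : List α} {P : List α → Prop} :
    (∀ q, q <+: l₁ ++ l₂ → P q) ↔
      (∀ q, q <+: l₁ → P q) ∧ ∀ q, q <+: l₂ → P (l₁ ++ q) := by
  induction l₁ generalizing P with
  | nil => exact ⟨fun h => ⟨fun q hq => by rw [prefix_nil.1 hq]; exact h _ nil_prefix, h⟩,
      fun h => h.2⟩
  | cons a l ih => simp only [cons_append, forall_prefix_cons_iff, ih, and_assoc]

end List

section Dyck

variable {p A B : List Bool}

theorem dyckNonneg_iff_take :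
    DyckNonneg p ↔ ∀ i, (p.take i).count false ≤ (p.take i).count true :=
  ⟨fun h i => h _ (take_prefix i p), fun h _ hq => prefix_iff_eq_take.1 hq ▸ h _⟩

theorem DyckNonneg.count_false_le (h : DyckNonneg p) : p.count false ≤ p.count true :=
  h p (prefix_refl p)

theorem dyckNonneg_append : DyckNonneg (A ++ B) ↔ DyckNonneg A ∧
    ∀ q, q <+: B → A.count false + q.count false ≤ A.count true + q.count true := by
  simp only [DyckNonneg, forall_prefix_append_iff, count_append]

theorem dyckNonneg_append_of_balanced (hA : A.count true = A.count false) :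
    DyckNonneg (A ++ B) ↔ DyckNonneg A ∧ DyckNonneg B := by
  rw [dyckNonneg_append, hA]
  simp only [Nat.add_le_add_iff_left]
  rfl

theorem dyckNonneg_insert_peak : DyckNonneg (A ++ true :: false :: B) ↔ DyckNonneg (A ++ B) := by
  rw [dyckNonneg_append, dyckNonneg_append, forall_prefix_cons_iff, forall_prefix_cons_iff]
  simp [← Nat.add_assoc]
  intro hA
  have := hA.count_false_le
  simp [this, Nat.le_add_right_of_le this]

theorem dyckNonneg_insert_valley :
    DyckNonneg (A ++ false :: true :: B) ↔
      DyckNonneg (A ++ B) ∧ A.count false < A.count true := by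
  rw [dyckNonneg_append, dyckNonneg_append, forall_prefix_cons_iff, forall_prefix_cons_iff]
  simp [← Nat.add_assoc]
  exact ⟨fun ⟨hA, _, hlt, h⟩ => ⟨⟨hA, h⟩, hlt⟩,
    fun ⟨⟨hA, h⟩, hlt⟩ => ⟨hA, hlt.le, hlt, h⟩⟩

theorem isDyck_nil : IsDyck [] := ⟨fun _ hq => by simp [prefix_nil.1 hq], rfl⟩

theorem IsDyck.dyckNonneg_of_append (h : IsDyck (A ++ B)) : DyckNonneg A :=
  (dyckNonneg_append.1 h.1).1

theorem isDyck_append_of_balanced (hA : A.count true = A.count false) :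
    IsDyck (A ++ B) ↔ IsDyck A ∧ IsDyck B := by
  simp only [IsDyck, dyckNonneg_append_of_balanced hA, count_append, hA, Nat.add_left_cancel_iff]
  tauto

theorem isDyck_insert_peak : IsDyck (A ++ true :: false :: B) ↔ IsDyck (A ++ B) := by
  simp [IsDyck, dyckNonneg_insert_peak, ← Nat.add_assoc]

theorem isDyck_insert_valley :
    IsDyck (A ++ false :: true :: B) ↔ IsDyck (A ++ B) ∧ A.count false < A.count true := by
  simp [IsDyck, dyckNonneg_insert_valley, ← Nat.add_assoc]
  tauto

theorem isDyck_insert_mountain (a : ℕ) :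
    IsDyck (A ++ replicate a true ++ replicate a false ++ B) ↔ IsDyck (A ++ B) := by
  induction a with
  | zero => simp
  | succ a ih =>
    rw [← ih, replicate_succ', replicate_succ]
    simpa only [append_assoc, cons_append, nil_append] using
      isDyck_insert_peak (A := A ++ replicate a true) (B := replicate a false ++ B)

theorem IsDyck.length_eq (h : IsDyck p) : p.length = 2 * p.count true := by
  have := count_true_add_count_false p
  have := h.2
  omega

theorem IsDyck.head?_ne_false (h : IsDyck p) : p.head? ≠ some false := by
  rcases p with _ | ⟨b, t⟩
  · simp
  · intro hb
    obtain rfl : b = false := by simpa using hb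
    simpa using h.1 [false] (cons_prefix_cons.2 ⟨rfl, nil_prefix⟩)

theorem IsDyck.getLast?_ne_true (h : IsDyck p) : p.getLast? ≠ some true := by
  rcases eq_nil_or_concat' p with rfl | ⟨t, b, rfl⟩
  · simp
  · intro hb
    obtain rfl : b = true := by simpa using hb
    have := h.dyckNonneg_of_append.count_false_le
    have := h.2
    simp at this
    omega

end Dyck

def boolEquivDyckStep : Bool ≃ DyckStep where
  toFun b := if b then .U else .D
  invFun s := s = .U
  left_inv b := by cases b <;> rfl
  right_inv s := by cases s <;> rfl

theorem count_map_boolEquivDyckStep (l : List Bool) (b : Bool) :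
    (l.map boolEquivDyckStep).count (boolEquivDyckStep b) = l.count b :=
  count_map_of_injective l _ boolEquivDyckStep.injective b

theorem count_map_boolEquivDyckStep_symm (l : List DyckStep) (s : DyckStep) :
    (l.map boolEquivDyckStep.symm).count (boolEquivDyckStep.symm s) = l.count s :=
  count_map_of_injective l _ boolEquivDyckStep.symm.injective s

abbrev DyckPath (m : ℕ) : Type := {p : List Bool // IsDyck p ∧ p.length = 2 * m}

def dyckPathEquiv (m : ℕ) : DyckPath m ≃ {w : DyckWord // w.semilength = m} where
  toFun p := ⟨⟨p.1.map boolEquivDyckStep,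
      (count_map_boolEquivDyckStep _ true).trans
        (p.2.1.2.trans (count_map_boolEquivDyckStep _ false).symm),
      fun i => by
        rw [← map_take]
        exact (count_map_boolEquivDyckStep _ false).trans_le
          ((dyckNonneg_iff_take.1 p.2.1.1 i).trans_eq (count_map_boolEquivDyckStep _ true).symm)⟩,
    by
      have := p.2.1.length_eq
      exact (count_map_boolEquivDyckStep p.1 true).trans (by omega)⟩
  invFun w := ⟨w.1.toList.map boolEquivDyckStep.symm,
    ⟨dyckNonneg_iff_take.2 fun i => by
        rw [← map_take]
        exact (count_map_boolEquivDyckStep_symm _ .D).trans_le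
          ((w.1.count_D_le_count_U i).trans_eq (count_map_boolEquivDyckStep_symm _ .U).symm),
      (count_map_boolEquivDyckStep_symm _ .U).trans
        (w.1.count_U_eq_count_D.trans (count_map_boolEquivDyckStep_symm _ .D).symm)⟩,
    by rw [length_map, ← w.1.two_mul_semilength_eq_length, w.2]⟩
  left_inv p := Subtype.ext (by simp)
  right_inv w := Subtype.ext (DyckWord.ext (by simp))

theorem card_dyckPath (m : ℕ) : Nat.card (DyckPath m) = catalan m := by
  rw [Nat.card_congr (dyckPathEquiv m), Nat.card_eq_fintype_card,
    DyckWord.card_dyckWord_semilength_eq_catalan]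

instance (m : ℕ) : Finite (DyckPath m) := .of_equiv _ (dyckPathEquiv m).symm

/-- Peaks `A ++ ud ++ B` of Dyck paths of semilength `m + 1`. -/
def MarkedPeak (m : ℕ) : Type :=
  {q : List Bool × List Bool //
    IsDyck (q.1 ++ true :: false :: q.2) ∧ q.1.length + q.2.length = 2 * m}

def markedPeakEquiv (m : ℕ) : MarkedPeak m ≃ DyckPath m × Fin (2 * m + 1) where
  toFun q := (⟨q.1.1 ++ q.1.2, isDyck_insert_peak.1 q.2.1, by rw [length_append, q.2.2]⟩,
    ⟨q.1.1.length, by have := q.2.2; omega⟩)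
  invFun x := ⟨(x.1.1.take x.2, x.1.1.drop x.2),
    by rw [isDyck_insert_peak, take_append_drop]; exact x.1.2.1,
    by rw [← length_append, take_append_drop, x.1.2.2]⟩
  left_inv q := Subtype.ext (by simp)
  right_inv x := Prod.ext (Subtype.ext (take_append_drop _ _))
    (Fin.ext (length_take_of_le (by have := x.2.2; have := x.1.2.2; omega)))

instance (m : ℕ) : Finite (MarkedPeak m) := .of_equiv _ (markedPeakEquiv m).symm

theorem card_markedPeak (m : ℕ) : Nat.card (MarkedPeak m) = (2 * m + 1) * catalan m := by
  rw [Nat.card_congr (markedPeakEquiv m), Nat.card_prod, card_dyckPath, Nat.card_fin, mul_comm]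

/-- Hills (peaks on the x-axis) split a path into two Dyck paths. -/
def hillOfDyckPaths (m : ℕ) (x : Σ i : Fin (m + 1), DyckPath i × DyckPath (m - i)) :
    {q : MarkedPeak m // q.1.1.count true = q.1.1.count false} :=
  ⟨⟨(x.2.1.1, x.2.2.1),
    isDyck_insert_peak.2 ((isDyck_append_of_balanced x.2.1.2.1.2).2 ⟨x.2.1.2.1, x.2.2.2.1⟩),
    by have := x.1.2; have := x.2.1.2.2; have := x.2.2.2.2; simp only; omega⟩,
    x.2.1.2.1.2⟩

theorem hillOfDyckPaths_bijective (m : ℕ) : Function.Bijective (hillOfDyckPaths m) := by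
  constructor
  · rintro ⟨i, A, B⟩ ⟨j, A', B'⟩ h
    have h := congrArg (fun q => q.1.1) h
    simp only [hillOfDyckPaths, Prod.mk.injEq] at h
    obtain rfl : i = j := Fin.ext (by have := A.2.2; have := A'.2.2; rw [h.1] at *; omega)
    rw [Subtype.ext h.1, Subtype.ext h.2]
  · rintro ⟨⟨⟨A, B⟩, hd, hl⟩, hbal⟩
    dsimp only at hd hl hbal
    obtain ⟨hA, hB⟩ := (isDyck_append_of_balanced hbal).1 (isDyck_insert_peak.1 hd)
    have := hA.length_eq
    refine ⟨⟨⟨A.count true, by omega⟩, ⟨A, hA, this⟩, ⟨B, hB, ?_⟩⟩, rfl⟩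
    show B.length = 2 * (m - A.count true)
    omega

theorem card_hill (m : ℕ) :
    Nat.card {q : MarkedPeak m // q.1.1.count true = q.1.1.count false} = catalan (m + 1) := by
  rw [← Nat.card_eq_of_bijective _ (hillOfDyckPaths_bijective m), Nat.card_sigma, catalan_succ]
  simp only [Nat.card_prod, card_dyckPath]

/-- Valleys `A ++ du ++ B` of Dyck paths of semilength `m + 1`. -/
def MarkedValley (m : ℕ) : Type :=
  {q : List Bool × List Bool //
    IsDyck (q.1 ++ false :: true :: q.2) ∧ q.1.length + q.2.length = 2 * m}

def markedValleyEquiv (m : ℕ) :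
    MarkedValley m ≃ {q : MarkedPeak m // q.1.1.count true ≠ q.1.1.count false} where
  toFun v := ⟨⟨v.1, isDyck_insert_peak.2 (isDyck_insert_valley.1 v.2.1).1, v.2.2⟩,
    (isDyck_insert_valley.1 v.2.1).2.ne'⟩
  invFun q := ⟨q.1.1, isDyck_insert_valley.2 ⟨isDyck_insert_peak.1 q.1.2.1,
    (isDyck_insert_peak.1 q.1.2.1).dyckNonneg_of_append.count_false_le.lt_of_ne q.2.symm⟩,
    q.1.2.2⟩
  left_inv _ := rfl
  right_inv _ := rfl

theorem card_markedValley_add_catalan (m : ℕ) :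
    Nat.card (MarkedValley m) + catalan (m + 1) = (2 * m + 1) * catalan m := by
  rw [← card_markedPeak, ← Nat.card_congr (Equiv.sumCompl fun q : MarkedPeak m =>
    q.1.1.count true = q.1.1.count false), Nat.card_sum, card_hill,
    Nat.card_congr (markedValleyEquiv m), add_comm]

instance (m : ℕ) : Finite (MarkedValley m) := .of_equiv _ (markedValleyEquiv m).symm

/-- Splittings `A ++ B` of Dyck paths of semilength `m` at which `u^a d^a` can be inserted as a
maximal mountain. -/
def MountainSite (m : ℕ) : Type :=
  {q : List Bool × List Bool // q.1.getLast? ≠ some true ∧ q.2.head? ≠ some false ∧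
    IsDyck (q.1 ++ q.2) ∧ q.1.length + q.2.length = 2 * m}

instance (m : ℕ) : Finite (MountainSite m) :=
  Set.Finite.to_subtype <| ((finite_length_le Bool (2 * m)).prod
    (finite_length_le Bool (2 * m))).subset fun q hq => by
      have := hq.2.2.2
      exact ⟨(by omega : q.1.length ≤ 2 * m), (by omega : q.2.length ≤ 2 * m)⟩

def mountainSiteOfEndOrValley (m : ℕ) :
    DyckPath (m + 1) ⊕ DyckPath (m + 1) ⊕ MarkedValley m → MountainSite (m + 1) :=
  Sum.elim (fun p => ⟨([], p.1), by simp, p.2.1.head?_ne_false, p.2.1, by simpa using p.2.2⟩) <|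
    Sum.elim (fun p => ⟨(p.1, []), p.2.1.getLast?_ne_true, by simp, by simpa using p.2.1,
        by simpa using p.2.2⟩)
      fun v => ⟨(v.1.1 ++ [false], true :: v.1.2), by simp, by simp,
        by simpa using v.2.1, by have := v.2.2; simp; omega⟩

theorem mountainSiteOfEndOrValley_bijective (m : ℕ) :
    Function.Bijective (mountainSiteOfEndOrValley m) := by
  have hne (p : DyckPath (m + 1)) : p.1 ≠ [] := ne_nil_of_length_pos (by rw [p.2.2]; omega)
  constructor
  · refine Function.Injective.sumElim ?_ (Function.Injective.sumElim ?_ ?_ ?_) ?_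
    · intro p p' h
      exact Subtype.ext (congrArg (fun s : MountainSite (m + 1) => s.1.2) h)
    · intro p p' h
      exact Subtype.ext (congrArg (fun s : MountainSite (m + 1) => s.1.1) h)
    · intro v v' h
      have h := congrArg (fun s : MountainSite (m + 1) => s.1) h
      simp only [Prod.mk.injEq, append_cancel_right_eq, cons.injEq, true_and] at h
      exact Subtype.ext (Prod.ext h.1 h.2)
    · intro p v h
      have h := congrArg (fun s : MountainSite (m + 1) => s.1.2) h
      simp at h
    · rintro p (p' | v) h <;> have h := congrArg (fun s : MountainSite (m + 1) => s.1.1) h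
      · exact hne p' h.symm
      · exact append_ne_nil_of_right_ne_nil v.1.1 (cons_ne_nil false []) h.symm
  · rintro ⟨⟨A, B⟩, hA, hB, hd, hl⟩
    dsimp only at hA hB hd hl
    rcases eq_nil_or_concat' A with rfl | ⟨A, x, rfl⟩
    · exact ⟨.inl ⟨B, by simpa using hd, by simpa using hl⟩, rfl⟩
    obtain rfl : x = false := by simpa using hA
    rcases B with _ | ⟨y, B⟩
    · exact ⟨.inr (.inl ⟨A ++ [false], by simpa using hd, by simpa using hl⟩), rfl⟩
    obtain rfl : y = true := by simpa using hB
    refine ⟨.inr (.inr ⟨(A, B), by simpa using hd, show A.length + B.length = 2 * m by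
      simp at hl; omega⟩), rfl⟩

theorem card_mountainSite_succ (m : ℕ) :
    Nat.card (MountainSite (m + 1)) = 2 * catalan (m + 1) + Nat.card (MarkedValley m) := by
  rw [← Nat.card_eq_of_bijective _ (mountainSiteOfEndOrValley_bijective m), Nat.card_sum,
    Nat.card_sum, card_dyckPath, two_mul, add_assoc]

theorem card_mountainSite_zero : Nat.card (MountainSite 0) = 1 := by
  refine Nat.card_eq_one_iff_exists.2 ⟨⟨([], []), by simp, by simp, isDyck_nil, rfl⟩, ?_⟩
  rintro ⟨⟨A, B⟩, -, -, -, h⟩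
  obtain ⟨rfl, rfl⟩ : A = [] ∧ B = [] := by simpa using h
  rfl

instance (m : ℕ) : Finite (SymPeakMarked m) :=
  Set.Finite.to_subtype <| ((finite_length_le Bool m).prod
    ((Set.finite_Iic m).prod (finite_length_le Bool m))).subset fun q hq => by
      have := hq.2.2.2.2
      simp only [length_append, length_replicate] at this
      exact ⟨(by omega : q.1.length ≤ m), (by omega : q.2.1 ≤ m),
        (by omega : q.2.2.length ≤ m)⟩

def raiseOrInsertPeak (m : ℕ) :
    SymPeakMarked (2 * m) ⊕ MountainSite m → SymPeakMarked (2 * (m + 1)) :=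
  Sum.elim
    (fun s => ⟨(s.1.1, s.1.2.1 + 1, s.1.2.2), Nat.le_add_left 1 _, s.2.2.1, s.2.2.2.1,
      (isDyck_insert_mountain _).2 ((isDyck_insert_mountain _).1 s.2.2.2.2.1), by
        have := s.2.2.2.2.2
        simp only [length_append, length_replicate] at this ⊢
        omega⟩)
    fun t => ⟨(t.1.1, 1, t.1.2), le_rfl, t.2.1, t.2.2.1,
      (isDyck_insert_mountain 1).2 t.2.2.2.1, by
      have := t.2.2.2.2
      simp only [length_append, length_replicate]
      omega⟩

theorem raiseOrInsertPeak_bijective (m : ℕ) : Function.Bijective (raiseOrInsertPeak m) := by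
  constructor
  · refine Function.Injective.sumElim ?_ ?_ ?_
    · intro s s' h
      have h := congrArg (fun x : SymPeakMarked (2 * (m + 1)) => x.1) h
      simp only [Prod.mk.injEq, Nat.add_right_cancel_iff] at h
      exact Subtype.ext (Prod.ext h.1 (Prod.ext h.2.1 h.2.2))
    · intro t t' h
      have h := congrArg (fun x : SymPeakMarked (2 * (m + 1)) => x.1) h
      simp only [Prod.mk.injEq, true_and] at h
      exact Subtype.ext (Prod.ext h.1 h.2)
    · intro s t h
      have h := congrArg (fun x : SymPeakMarked (2 * (m + 1)) => x.1.2.1) h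
      have := s.2.1
      simp only at h
      omega
  · rintro ⟨⟨A, _ | _ | a, B⟩, ha, hA, hB, hd, hl⟩
    · simp at ha
    · exact ⟨.inr ⟨(A, B), hA, hB, (isDyck_insert_mountain 1).1 hd,
        show A.length + B.length = 2 * m by simp at hl; omega⟩, rfl⟩
    · exact ⟨.inl ⟨(A, a + 1, B), by simp, hA, hB,
        (isDyck_insert_mountain _).2 ((isDyck_insert_mountain _).1 hd),
        by simp at hl ⊢; omega⟩, rfl⟩

theorem card_symPeakMarked_succ (m : ℕ) :
    Nat.card (SymPeakMarked (2 * (m + 1)))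
      = Nat.card (SymPeakMarked (2 * m)) + Nat.card (MountainSite m) := by
  rw [← Nat.card_eq_of_bijective _ (raiseOrInsertPeak_bijective m), Nat.card_sum]

theorem card_symPeakMarked_zero : Nat.card (SymPeakMarked 0) = 0 := by
  have : IsEmpty (SymPeakMarked 0) := ⟨fun s => by
    have := s.2.1
    have := s.2.2.2.2.2
    simp only [length_append, length_replicate] at this
    omega⟩
  exact Nat.card_of_isEmpty

theorem succ_succ_mul_catalan_succ (m : ℕ) :
    (m + 2) * catalan (m + 1) = 2 * (2 * m + 1) * catalan m := by
  refine Nat.eq_of_mul_eq_mul_left m.succ_pos ?_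
  calc (m + 1) * ((m + 2) * catalan (m + 1)) = (m + 1) * (m + 1).centralBinom := by
        rw [← succ_mul_catalan_eq_centralBinom]
    _ = 2 * (2 * m + 1) * m.centralBinom := Nat.succ_mul_centralBinom_succ m
    _ = (m + 1) * (2 * (2 * m + 1) * catalan m) := by
        rw [← succ_mul_catalan_eq_centralBinom]
        ring

theorem two_mul_card_mountainSite_succ (m : ℕ) :
    2 * Nat.card (MountainSite (m + 1)) = (m + 4) * catalan (m + 1) := by
  have hvalley := card_markedValley_add_catalan m
  have hcat := succ_succ_mul_catalan_succ m
  rw [card_mountainSite_succ]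
  nlinarith

/-- The total number of symmetric peaks over all Dyck paths of length 2(n+1)
equals 1 + Σ_{i=1}^{n} ((i+3)/2)·C_i  (stated with both sides doubled to avoid
division). -/
theorem total_symmetric_peaks (n : ℕ) :
    2 * Nat.card (SymPeakMarked (2 * (n + 1)))
      = 2 + ∑ i ∈ Finset.Icc 1 n, (i + 3) * catalan i := by
  induction n with
  | zero =>
    rw [card_symPeakMarked_succ, Nat.mul_zero, card_symPeakMarked_zero, card_mountainSite_zero]
    rfl
  | succ n ih =>
    rw [card_symPeakMarked_succ, mul_add, ih, two_mul_card_mountainSite_succ,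
      Finset.sum_Icc_succ_top (by omega), add_assoc]
end

section
/- The generating function Σ_{n≥0} ap(n) x^n of the total number of asymmetric peaks over all Dyck paths of length 2(n+3) equals (1/x^3)·((1-3x)/((1-x)·sqrt(1-4x)) − 1). -/
/-!
Reversing a Dyck path and swapping up and down steps exchanges the two sides of every peak, so the
asymmetric peaks `u^a d^b` with `a > b` are exactly half of all of them. Writing such a path as
`A' u^(b+1) d^b u B'`, the data is a free choice of `b ≥ 1`, a nonnegative path `A'` from height `0`
to some `h`, and a nonnegative path `B'` from `h + 2` down to `0`. Nonnegative paths from `h` down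
to `0` have length generating function `x^h C(x²)^(h+1)`, `C` the Catalan series, because both
sides satisfy the same first-step recursion. Summing over `h` and `b` gives
`(1 - x) Σ ap(n) xⁿ = 2 C⁴ / (1 - x C²)`, and `1/√(1 - 4x) = 1/(1 - 2xC)` turns this into the
closed form.
-/

open PowerSeries

/-- Dyck paths of length `m` with a distinguished asymmetric peak
(a maximal mountain `u^a d^b` with `a ≠ b`). -/
def AsymPeakMarked (m : ℕ) : Type :=
  { q : List Bool × ℕ × ℕ × List Bool //
      1 ≤ q.2.1 ∧ 1 ≤ q.2.2.1 ∧ q.2.1 ≠ q.2.2.1 ∧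
      q.1.getLast? ≠ some true ∧
      q.2.2.2.head? ≠ some false ∧
      IsDyck (q.1 ++ List.replicate q.2.1 true ++ List.replicate q.2.2.1 false ++ q.2.2.2) ∧
      (q.1 ++ List.replicate q.2.1 true ++ List.replicate q.2.2.1 false ++ q.2.2.2).length = m }

/-- ap(n): the total number of asymmetric peaks over all Dyck paths of length 2(n+3). -/
noncomputable def ap (n : ℕ) : ℕ := Nat.card (AsymPeakMarked (2 * (n + 3)))

open Finset

namespace LatticePath

/-- `l` is a path from height `H` to height `h` that never goes below `0`. -/
def IsPath (H h : ℕ) (l : List Bool) : Prop :=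
  (∀ q : List Bool, q <+: l → q.count false ≤ H + q.count true) ∧
    H + l.count true = h + l.count false

theorem isDyck_iff_isPath {l : List Bool} : IsDyck l ↔ IsPath 0 0 l := by
  simp [IsDyck, DyckNonneg, IsPath]

variable {H h : ℕ} {l : List Bool}

theorem IsPath.le_add_length (hl : IsPath H h l) : h ≤ H + l.length := by
  have := hl.2; have := l.count_true_add_count_false; omega

theorem IsPath.le_add_length' (hl : IsPath H h l) : H ≤ h + l.length := by
  have := hl.2; have := l.count_true_add_count_false; omega

@[simp] theorem isPath_nil : IsPath H h [] ↔ H = h := by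
  simp [IsPath]

theorem isPath_cons {x : Bool} {H' : ℕ} (hH : H + x.toNat = H' + (!x).toNat) :
    IsPath H h (x :: l) ↔ IsPath H' h l := by
  have hc (q : List Bool) : (x :: q).count true = q.count true + x.toNat ∧
      (x :: q).count false = q.count false + (!x).toNat := by
    cases x <;> simp
  simp only [IsPath, List.prefix_cons_iff, forall_eq_or_imp, forall_exists_index, and_imp,
    List.count_nil, (hc _).1, (hc _).2]
  constructor
  · rintro ⟨⟨-, hq⟩, hl⟩
    refine ⟨fun q hq' => ?_, by omega⟩
    have := hq _ q rfl hq'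
    simp only [(hc _).1, (hc _).2] at this
    omega
  · rintro ⟨hq, hl⟩
    refine ⟨⟨by omega, fun _ q hq' hp => ?_⟩, by omega⟩
    subst hq'
    have := hq q hp
    simp only [(hc _).1, (hc _).2]
    omega

@[simp] theorem isPath_cons_true : IsPath H h (true :: l) ↔ IsPath (H + 1) h l :=
  isPath_cons (by simp)

@[simp] theorem isPath_succ_cons_false : IsPath (H + 1) h (false :: l) ↔ IsPath H h l :=
  isPath_cons (by simp)

@[simp] theorem not_isPath_zero_cons_false : ¬ IsPath 0 h (false :: l) := fun hl => by
  simpa using hl.1 [false] (List.cons_prefix_cons.2 ⟨rfl, List.nil_prefix⟩)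

theorem isPath_append {x y : List Bool} :
    IsPath H h (x ++ y) ↔ ∃ k, IsPath H k x ∧ IsPath k h y := by
  induction x generalizing H with
  | nil => simp
  | cons b x ih =>
    cases b
    · cases H <;> simp [ih]
    · simp [ih]

@[simp] theorem isPath_replicate_true {a : ℕ} :
    IsPath H h (List.replicate a true) ↔ h = H + a := by
  induction a generalizing H with
  | zero => simp [eq_comm]
  | succ a ih => simp only [List.replicate_succ, isPath_cons_true, ih]; omega

@[simp] theorem isPath_replicate_false {b : ℕ} :
    IsPath H h (List.replicate b false) ↔ H = h + b := by
  induction b generalizing H with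
  | zero => simp
  | succ b ih =>
    cases H
    · simp [List.replicate_succ]
    · simp only [List.replicate_succ, isPath_succ_cons_false, ih]; omega

def mirror (l : List Bool) : List Bool := (l.map not).reverse

@[simp] theorem mirror_nil : mirror [] = [] := rfl

@[simp] theorem mirror_cons (x : Bool) (l : List Bool) : mirror (x :: l) = mirror l ++ [!x] := by
  simp [mirror]

@[simp] theorem mirror_mirror (l : List Bool) : mirror (mirror l) = l := by
  simp [mirror, Function.comp_def]

@[simp] theorem length_mirror (l : List Bool) : (mirror l).length = l.length := by
  simp [mirror]

@[simp] theorem head?_mirror (l : List Bool) : (mirror l).head? = l.getLast?.map not := by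
  simp [mirror, List.head?_reverse, List.getLast?_map]

@[simp] theorem getLast?_mirror (l : List Bool) : (mirror l).getLast? = l.head?.map not := by
  simp [mirror, List.getLast?_reverse, List.head?_map]

theorem IsPath.mirror (hl : IsPath H h l) : IsPath h H (mirror l) := by
  induction l generalizing H with
  | nil => simp_all [eq_comm]
  | cons x l ih =>
    rw [mirror_cons, isPath_append]
    cases x
    · cases H
      · simp at hl
      · exact ⟨_, ih (isPath_succ_cons_false.1 hl), by simp⟩
    · exact ⟨_, ih (isPath_cons_true.1 hl), by simp⟩

@[simp] theorem isPath_mirror_iff : IsPath h H (mirror l) ↔ IsPath H h l :=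
  ⟨fun hl => by simpa using hl.mirror, IsPath.mirror⟩

noncomputable def lists (n : ℕ) : Finset (List Bool) :=
  (univ : Finset (List.Vector Bool n)).map ⟨List.Vector.toList, List.Vector.toList_injective⟩

@[simp] theorem mem_lists {n : ℕ} : l ∈ lists n ↔ l.length = n :=
  ⟨fun hl => by obtain ⟨v, -, rfl⟩ := mem_map.1 hl; exact v.2,
    fun hl => mem_map.2 ⟨⟨l, hl⟩, mem_univ _, rfl⟩⟩

open scoped Classical in
noncomputable def paths (H h n : ℕ) : Finset (List Bool) := (lists n).filter (IsPath H h)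

@[simp] theorem mem_paths {n : ℕ} : l ∈ paths H h n ↔ l.length = n ∧ IsPath H h l := by
  simp [paths]

theorem card_paths_comm (H h n : ℕ) : #(paths H h n) = #(paths h H n) :=
  card_nbij' mirror mirror (fun l hl => by simp_all) (fun l hl => by simp_all)
    (fun l _ => mirror_mirror l) (fun l _ => mirror_mirror l)

theorem card_paths_length_zero (H h : ℕ) : #(paths H h 0) = if H = h then 1 else 0 := by
  have : paths H h 0 = if H = h then {[]} else ∅ := by
    ext l; split_ifs <;> simp_all [List.length_eq_zero_iff]
  rw [this]; split_ifs <;> rfl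

theorem card_paths_zero_succ (h n : ℕ) : #(paths 0 h (n + 1)) = #(paths 1 h n) := by
  have : paths 0 h (n + 1) = (paths 1 h n).map ⟨List.cons true, List.cons_injective⟩ := by
    ext l
    rcases l with _ | ⟨_ | _, l⟩ <;> simp
  rw [this, card_map]

theorem card_paths_succ_succ (H h n : ℕ) :
    #(paths (H + 1) h (n + 1)) = #(paths (H + 2) h n) + #(paths H h n) := by
  have : paths (H + 1) h (n + 1) = (paths (H + 2) h n).map ⟨List.cons true, List.cons_injective⟩ ∪
      (paths H h n).map ⟨List.cons false, List.cons_injective⟩ := by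
    ext l
    rcases l with _ | ⟨_ | _, l⟩ <;> simp
  have hdisj : Disjoint ((paths (H + 2) h n).map ⟨List.cons true, List.cons_injective⟩)
      ((paths H h n).map ⟨List.cons false, List.cons_injective⟩) :=
    disjoint_left.2 fun l => by simp only [mem_map, Function.Embedding.coeFn_mk]; grind
  rw [this, card_union_of_disjoint hdisj, card_map, card_map]

theorem rdropWhile_rtakeWhile_append_replicate_true {A : List Bool} (hA : A.getLast? ≠ some true)
    (c : ℕ) :
    (A ++ List.replicate c true).rdropWhile id = A ∧
      (A ++ List.replicate c true).rtakeWhile id = List.replicate c true := by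
  induction c with
  | zero =>
    have hA' : ∀ hl : A ≠ [], ¬ id (A.getLast hl) = true := fun hl h => by
      simp_all [List.getLast?_eq_some_getLast hl]
    simp [List.rdropWhile_eq_self_iff.2 hA', List.rtakeWhile_eq_nil_iff.2 hA']
  | succ c ih =>
    rw [List.replicate_succ', ← List.append_assoc, List.rdropWhile_concat_pos _ _ _ rfl,
      List.rtakeWhile_concat_pos _ _ _ rfl, ih.1, ih.2]
    exact ⟨rfl, rfl⟩

theorem rdropWhile_append_replicate_rtakeWhile (l : List Bool) :
    l.rdropWhile id ++ List.replicate (l.rtakeWhile id).length true = l := by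
  conv_rhs => rw [← List.rdropWhile_append_rtakeWhile (p := id) (l := l)]
  congr 1
  exact (List.eq_replicate_iff.2 ⟨rfl, fun _ hx => List.mem_rtakeWhile_imp hx⟩).symm

theorem getLast?_rdropWhile_id_ne (l : List Bool) : (l.rdropWhile id).getLast? ≠ some true := by
  intro h
  have hl : l.rdropWhile id ≠ [] := by rintro h'; simp [h'] at h
  exact List.rdropWhile_last_not id l hl (by simpa [List.getLast?_eq_some_getLast hl] using h)

theorem IsPath.rdropWhile_id {H h : ℕ} {l : List Bool} (hl : IsPath H h l) :
    ∃ k, IsPath H k (l.rdropWhile id) ∧ h = k + (l.rtakeWhile id).length := by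
  rw [← rdropWhile_append_replicate_rtakeWhile l, isPath_append] at hl
  simpa using hl

section Series

variable {R : Type*} [CommRing R]

def IsBallotSystem (F : ℕ → R⟦X⟧) : Prop :=
  F 0 = 1 + X * F 1 ∧ ∀ h, F (h + 1) = X * (F h + F (h + 2))

theorem IsBallotSystem.unique {F G : ℕ → R⟦X⟧} (hF : IsBallotSystem F) (hG : IsBallotSystem G) :
    F = G := by
  suffices ∀ n h, coeff n (F h) = coeff n (G h) from funext fun h => ext fun n => this n h
  intro n
  induction n with
  | zero =>
    rintro (_ | h)
    · rw [hF.1, hG.1]; simp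
    · rw [hF.2 h, hG.2 h]; simp
  | succ n ih =>
    rintro (_ | h)
    · rw [hF.1, hG.1]; simp [coeff_succ_X_mul, ih]
    · rw [hF.2 h, hG.2 h]; simp [coeff_succ_X_mul, ih]

theorem isBallotSystem_card_paths :
    IsBallotSystem fun h => (mk fun n => (#(paths h 0 n) : R)) := by
  refine ⟨ext fun n => ?_, fun h => ext fun n => ?_⟩ <;> rcases n with _ | n
  · simp [card_paths_length_zero]
  · simp [coeff_succ_X_mul, card_paths_zero_succ]
  · simp [card_paths_length_zero]
  · simp [coeff_succ_X_mul, card_paths_succ_succ]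
    ring

variable (R) in
theorem map_catalanSeries_eq :
    catalanSeries.map (Nat.castRingHom R) = 1 + X * catalanSeries.map (Nat.castRingHom R) ^ 2 := by
  have h := congrArg (map (Nat.castRingHom R)) catalanSeries_sq_mul_X_add_one
  simp only [map_add, map_mul, map_pow, map_X, map_one] at h
  linear_combination -h

theorem isBallotSystem_catalan :
    IsBallotSystem fun h =>
      X ^ h * expand 2 two_ne_zero (catalanSeries.map (Nat.castRingHom R)) ^ (h + 1) := by
  have hC := congrArg (expand 2 two_ne_zero) (map_catalanSeries_eq R)
  simp only [map_add, map_mul, map_pow, map_one, expand_X] at hC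
  set c := expand 2 two_ne_zero (catalanSeries.map (Nat.castRingHom R))
  refine ⟨?_, fun h => ?_⟩
  · linear_combination hC
  · linear_combination (X ^ (h + 1) * c ^ (h + 1)) * hC

theorem mk_card_paths (h : ℕ) :
    (mk fun n => (#(paths h 0 n) : R)) =
      X ^ h * expand 2 two_ne_zero (catalanSeries.map (Nat.castRingHom R)) ^ (h + 1) :=
  congrFun (isBallotSystem_card_paths.unique isBallotSystem_catalan) h

theorem sum_antidiagonal_card_paths_mul (h i : ℕ) :
    ∑ p ∈ antidiagonal (2 * i), (#(paths 0 h p.1) * #(paths (h + 2) 0 p.2) : R) =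
      coeff i (X ^ (h + 1) * (catalanSeries.map (Nat.castRingHom R)) ^ (2 * h + 4)) := by
  calc _ = coeff (2 * i)
        ((mk fun n => (#(paths h 0 n) : R)) * mk fun n => (#(paths (h + 2) 0 n) : R)) := by
        simp [coeff_mul, card_paths_comm 0 h]
    _ = coeff (2 * i) (expand 2 two_ne_zero (X ^ (h + 1) *
        (catalanSeries.map (Nat.castRingHom R)) ^ (2 * h + 4))) := by
        rw [mk_card_paths, mk_card_paths]
        simp only [map_mul, map_pow, expand_X]
        ring_nf
    _ = _ := coeff_expand_mul ..

end Series

end LatticePath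

namespace PowerSeries

theorem coeff_ofNat_mul {R : Type*} [Semiring R] (k n : ℕ) [k.AtLeastTwo]
    (f : R⟦X⟧) : coeff n ((ofNat(k) : R⟦X⟧) * f) = ofNat(k) * coeff n f := by
  rw [← map_ofNat C k, coeff_C_mul]

theorem X_pow_dvd_inv_one_sub_sub_geom_sum {k : Type*} [Field k] {f : k⟦X⟧} (hf : X ∣ f) (n : ℕ) :
    X ^ n ∣ (1 - f)⁻¹ - ∑ i ∈ range n, f ^ i := by
  have hu : (1 - f)⁻¹ * (1 - f) = 1 := PowerSeries.inv_mul_cancel _ (by simp [X_dvd_iff.1 hf])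
  have : (1 - f)⁻¹ - ∑ i ∈ range n, f ^ i = (1 - f)⁻¹ * f ^ n := by
    linear_combination (∑ i ∈ range n, f ^ i) * hu - (1 - f)⁻¹ * geom_sum_mul_neg f n
  rw [this]
  exact dvd_mul_of_dvd_right (pow_dvd_pow_of_dvd hf n) _

theorem one_sub_X_mul_mk_sum_range_coeff {R : Type*} [CommRing R] (f : R⟦X⟧) :
    (1 - X) * mk (fun n => ∑ j ∈ range (n + 1), coeff j f) = f := by
  ext n
  cases n <;> simp [sub_mul, coeff_succ_X_mul, sum_range_succ]

end PowerSeries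

namespace AsymPeakMarked

open LatticePath

def IsAsymPeak (m : ℕ) (q : List Bool × ℕ × ℕ × List Bool) : Prop :=
  1 ≤ q.2.1 ∧ 1 ≤ q.2.2.1 ∧ q.2.1 ≠ q.2.2.1 ∧
    q.1.getLast? ≠ some true ∧
    q.2.2.2.head? ≠ some false ∧
    IsDyck (q.1 ++ List.replicate q.2.1 true ++ List.replicate q.2.2.1 false ++ q.2.2.2) ∧
    (q.1 ++ List.replicate q.2.1 true ++ List.replicate q.2.2.1 false ++ q.2.2.2).length = m

theorem isAsymPeak_iff {m a b : ℕ} {A B : List Bool} :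
    IsAsymPeak m (A, a, b, B) ↔ 1 ≤ a ∧ 1 ≤ b ∧ a ≠ b ∧ A.getLast? ≠ some true ∧
      B.head? ≠ some false ∧ (∃ k k', IsPath 0 k A ∧ k + a = k' + b ∧ IsPath k' 0 B) ∧
      A.length + a + b + B.length = m := by
  simp [IsAsymPeak, isDyck_iff_isPath, isPath_append, add_assoc]

noncomputable def listsUpTo (m : ℕ) : Finset (List Bool) := (range (m + 1)).biUnion lists

open scoped Classical in
noncomputable def finset (m : ℕ) : Finset (List Bool × ℕ × ℕ × List Bool) :=
  (listsUpTo m ×ˢ range (m + 1) ×ˢ range (m + 1) ×ˢ listsUpTo m).filter (IsAsymPeak m)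

theorem mem_finset {m : ℕ} {q : List Bool × ℕ × ℕ × List Bool} : q ∈ finset m ↔ IsAsymPeak m q := by
  obtain ⟨A, a, b, B⟩ := q
  simp only [finset, listsUpTo, mem_filter, mem_product, mem_biUnion, mem_range, mem_lists,
    exists_eq_right', and_iff_right_iff_imp, isAsymPeak_iff]
  omega

theorem natCard_eq_card_finset (m : ℕ) : Nat.card (AsymPeakMarked m) = #(finset m) := by
  rw [← Nat.card_eq_finsetCard]
  exact Nat.card_congr (Equiv.subtypeEquivRight fun _ => mem_finset.symm)

def swap (q : List Bool × ℕ × ℕ × List Bool) : List Bool × ℕ × ℕ × List Bool :=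
  (mirror q.2.2.2, q.2.2.1, q.2.1, mirror q.1)

theorem swap_swap (q : List Bool × ℕ × ℕ × List Bool) : swap (swap q) = q := by
  simp [swap]

theorem IsAsymPeak.swap {m : ℕ} {q : List Bool × ℕ × ℕ × List Bool} (hq : IsAsymPeak m q) :
    IsAsymPeak m (swap q) := by
  obtain ⟨A, a, b, B⟩ := q
  obtain ⟨ha, hb, hab, hA, hB, ⟨k, k', hkA, hk, hk'B⟩, hlen⟩ := isAsymPeak_iff.1 hq
  refine isAsymPeak_iff.2 ⟨hb, ha, Ne.symm hab, ?_, ?_, ⟨k', k, hk'B.mirror, hk.symm, hkA.mirror⟩,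
    by simp only [length_mirror]; omega⟩
  · rcases B with _ | ⟨_ | _, B⟩ <;> simp_all
  · rcases hA' : A.getLast? with _ | _ | _ <;> simp_all

theorem card_finset_eq_two_mul (m : ℕ) :
    #(finset m) = 2 * #((finset m).filter fun q => q.2.2.1 < q.2.1) := by
  have hswap : #((finset m).filter fun q => q.2.1 < q.2.2.1) =
      #((finset m).filter fun q => q.2.2.1 < q.2.1) :=
    card_nbij' swap swap
      (fun q hq => by rw [mem_coe, mem_filter, mem_finset] at hq ⊢; exact ⟨hq.1.swap, hq.2⟩)
      (fun q hq => by rw [mem_coe, mem_filter, mem_finset] at hq ⊢; exact ⟨hq.1.swap, hq.2⟩)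
      (fun q _ => swap_swap q) (fun q _ => swap_swap q)
  have hne : ((finset m).filter fun q => ¬ q.2.2.1 < q.2.1) =
      (finset m).filter fun q => q.2.1 < q.2.2.1 :=
    filter_congr fun q hq => by have := (mem_finset.1 hq).2.2.1; omega
  rw [← card_filter_add_card_filter_not (fun q => q.2.2.1 < q.2.1), hne, hswap, two_mul]

abbrev Decomposition : Type := Σ _ : ℕ, Σ _ : ℕ, Σ _ : ℕ × ℕ, List Bool × List Bool

/-- A peak `u^a d^b` with `a > b` of a Dyck path `A u^a d^b B` of length `2 (M + 1)` is cut as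
`A' u^(b+1) d^b u B'` with `A' = A u^(a-b-1)`, and `split` records it as
`⟨M - b, h, (|A'|, |B'|), (A', B')⟩`, where `h` is the final height of `A'`.
Since `|A'| ≥ h` and `|B'| ≥ h + 2`, necessarily `h < M - b`. -/
noncomputable def decompositions (M : ℕ) : Finset Decomposition :=
  (range M).sigma fun i => (range i).sigma fun h => (antidiagonal (2 * i)).sigma fun p =>
    paths 0 h p.1 ×ˢ paths (h + 2) 0 p.2

theorem card_decompositions (M : ℕ) :
    #(decompositions M) = ∑ i ∈ range M, ∑ h ∈ range i, ∑ p ∈ antidiagonal (2 * i),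
      #(paths 0 h p.1) * #(paths (h + 2) 0 p.2) := by
  simp [decompositions, card_sigma, card_product]

def split (M : ℕ) : List Bool × ℕ × ℕ × List Bool → Decomposition
  | (A, a, b, B) =>
    ⟨M - b, A.count true - A.count false + (a - b - 1), (A.length + (a - b - 1), B.length - 1),
      (A ++ List.replicate (a - b - 1) true, B.tail)⟩

def glue (M : ℕ) : Decomposition → List Bool × ℕ × ℕ × List Bool
  | ⟨i, _, _, A, B⟩ => (A.rdropWhile id, (A.rtakeWhile id).length + (M - i) + 1, M - i, true :: B)

theorem exists_eq_cons_of_isAsymPeak {m a b : ℕ} {A B : List Bool} (hq : IsAsymPeak m (A, a, b, B))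
    (hba : b < a) : ∃ k B', B = true :: B' ∧ IsPath 0 k A ∧ IsPath (k + (a - b) + 1) 0 B' := by
  obtain ⟨-, -, -, -, hB, ⟨k, k', hkA, hk, hk'B⟩, -⟩ := isAsymPeak_iff.1 hq
  rcases B with _ | ⟨_ | _, B'⟩
  · simp only [isPath_nil] at hk'B; omega
  · simp at hB
  · exact ⟨k, B', rfl, hkA, by simpa [show k' = k + (a - b) by omega] using hk'B⟩

theorem split_mem {M : ℕ} {q : List Bool × ℕ × ℕ × List Bool} (hq : IsAsymPeak (2 * (M + 1)) q)
    (hba : q.2.2.1 < q.2.1) : split M q ∈ decompositions M := by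
  obtain ⟨A, a, b, B⟩ := q
  dsimp only at hba
  obtain ⟨k, B', rfl, hkA, hB'⟩ := exists_eq_cons_of_isAsymPeak hq hba
  obtain ⟨ha, hb, -, -, -, -, hlen⟩ := isAsymPeak_iff.1 hq
  have hk : A.count true - A.count false = k := by have := hkA.2; omega
  have := hkA.le_add_length
  have := hB'.le_add_length'
  simp only [split, decompositions, mem_sigma, mem_range, HasAntidiagonal.mem_antidiagonal,
    mem_product, mem_paths, List.length_append, List.length_replicate, List.length_cons,
    List.tail_cons, isPath_append, isPath_replicate_true]
  simp only [List.length_cons] at hlen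
  rw [hk]
  refine ⟨by omega, by omega, by omega, ⟨trivial, k, hkA, rfl⟩, by omega, ?_⟩
  rwa [show k + (a - b - 1) + 2 = k + (a - b) + 1 by omega]

theorem glue_mem {M : ℕ} {x : Decomposition}
    (hx : x ∈ decompositions M) :
    IsAsymPeak (2 * (M + 1)) (glue M x) ∧ (glue M x).2.2.1 < (glue M x).2.1 := by
  obtain ⟨i, h, ⟨p₁, p₂⟩, A', B'⟩ := x
  simp only [decompositions, mem_sigma, mem_range, HasAntidiagonal.mem_antidiagonal, mem_product,
    mem_paths] at hx
  obtain ⟨hi, hh, hp, ⟨hA'len, hA'⟩, hB'len, hB'⟩ := hx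
  obtain ⟨k, hkA, hk⟩ := hA'.rdropWhile_id
  have hlen := congrArg List.length (rdropWhile_append_replicate_rtakeWhile A')
  simp only [List.length_append, List.length_replicate] at hlen
  refine ⟨isAsymPeak_iff.2 ⟨by omega, by omega, by omega, getLast?_rdropWhile_id_ne A', by simp,
    ⟨k, h + 1, hkA, by omega, by simpa⟩, by simp only [List.length_cons]; omega⟩, by simp [glue]⟩

theorem glue_split {M : ℕ} {q : List Bool × ℕ × ℕ × List Bool} (hq : IsAsymPeak (2 * (M + 1)) q)
    (hba : q.2.2.1 < q.2.1) : glue M (split M q) = q := by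
  obtain ⟨A, a, b, B⟩ := q
  dsimp only at hba
  obtain ⟨k, B', rfl, -, -⟩ := exists_eq_cons_of_isAsymPeak hq hba
  obtain ⟨-, -, -, hA, -, -, hlen⟩ := isAsymPeak_iff.1 hq
  obtain ⟨h₁, h₂⟩ := rdropWhile_rtakeWhile_append_replicate_true hA (a - b - 1)
  simp only [List.length_cons] at hlen
  simp only [split, glue, h₁, h₂, List.length_replicate, List.tail_cons, Prod.mk.injEq, true_and,
    and_true]
  omega

theorem split_glue {M : ℕ} {x : Decomposition}
    (hx : x ∈ decompositions M) : split M (glue M x) = x := by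
  obtain ⟨i, h, ⟨p₁, p₂⟩, A', B'⟩ := x
  simp only [decompositions, mem_sigma, mem_range, HasAntidiagonal.mem_antidiagonal, mem_product,
    mem_paths] at hx
  obtain ⟨hi, hh, hp, ⟨hA'len, hA'⟩, hB'len, hB'⟩ := hx
  obtain ⟨k, hkA, hk⟩ := hA'.rdropWhile_id
  have hlen := congrArg List.length (rdropWhile_append_replicate_rtakeWhile A')
  simp only [List.length_append, List.length_replicate] at hlen
  have hcount : (A'.rdropWhile id).count true - (A'.rdropWhile id).count false = k := by
    have := hkA.2; omega
  simp only [glue, split, List.length_cons, List.tail_cons, hcount,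
    show (A'.rtakeWhile id).length + (M - i) + 1 - (M - i) - 1 = (A'.rtakeWhile id).length by omega,
    rdropWhile_append_replicate_rtakeWhile, show M - (M - i) = i by omega, ← hk, hlen, hA'len,
    hB'len, Nat.add_sub_cancel]

theorem card_filter_lt_eq_card_decompositions (M : ℕ) :
    #((finset (2 * (M + 1))).filter fun q => q.2.2.1 < q.2.1) = #(decompositions M) :=
  card_nbij' (split M) (glue M)
    (fun _ hq => by rw [mem_coe, mem_filter, mem_finset] at hq; exact split_mem hq.1 hq.2)
    (fun _ hx => by rw [mem_coe, mem_filter, mem_finset]; exact glue_mem hx)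
    (fun _ hq => by rw [mem_coe, mem_filter, mem_finset] at hq; exact glue_split hq.1 hq.2)
    (fun _ hx => split_glue hx)

theorem natCard_eq_two_mul_sum (M : ℕ) :
    Nat.card (AsymPeakMarked (2 * (M + 1))) = 2 * ∑ i ∈ range M, ∑ h ∈ range i,
      ∑ p ∈ antidiagonal (2 * i), #(paths 0 h p.1) * #(paths (h + 2) 0 p.2) := by
  rw [natCard_eq_card_finset, card_finset_eq_two_mul, card_filter_lt_eq_card_decompositions,
    card_decompositions]

end AsymPeakMarked

open LatticePath

local notation "𝒞" => PowerSeries.map (Nat.castRingHom ℚ) catalanSeries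

theorem sum_range_coeff_X_pow_mul_catalan (i : ℕ) :
    ∑ h ∈ range i, coeff i (X ^ (h + 1) * 𝒞 ^ (2 * h + 4)) =
      coeff i (X * (𝒞 ^ 4 * (1 - X * 𝒞 ^ 2)⁻¹)) := by
  rw [← map_sum, ← sub_eq_zero, ← map_sub]
  refine X_pow_dvd_iff.1 ?_ i i.lt_succ_self
  have hgeom : ∑ h ∈ range i, X ^ (h + 1) * 𝒞 ^ (2 * h + 4) =
      X * 𝒞 ^ 4 * ∑ h ∈ range i, (X * 𝒞 ^ 2) ^ h := by
    rw [mul_sum]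
    exact sum_congr rfl fun h _ => by ring
  rw [hgeom, ← mul_assoc, ← mul_sub, pow_succ', ← neg_sub]
  exact mul_dvd_mul (dvd_mul_right X _)
    ((dvd_neg).2 (X_pow_dvd_inv_one_sub_sub_geom_sum (dvd_mul_right X _) i))

theorem ap_eq_sum_range_coeff (n : ℕ) :
    (ap n : ℚ) = ∑ j ∈ range (n + 1), coeff j (2 * (𝒞 ^ 4 * (1 - X * 𝒞 ^ 2)⁻¹)) := by
  rw [ap, show n + 3 = n + 2 + 1 from rfl, AsymPeakMarked.natCard_eq_two_mul_sum]
  push_cast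
  simp_rw [sum_antidiagonal_card_paths_mul, sum_range_coeff_X_pow_mul_catalan]
  rw [sum_range_succ', coeff_zero_X_mul, add_zero]
  simp [coeff_succ_X_mul, mul_sum, two_mul]

theorem coeff_invSqrtGF (n : ℕ) : coeff n invSqrtGF = n.centralBinom := by
  simp [invSqrtGF, Nat.centralBinom]

theorem constantCoeff_invSqrtGF : constantCoeff invSqrtGF = 1 := by
  simp [invSqrtGF]

theorem one_sub_four_X_mul_derivative_invSqrtGF :
    (1 - 4 * X) * d⁄dX ℚ invSqrtGF = 2 * invSqrtGF := by
  ext n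
  rcases n with _ | n
  · simp only [sub_mul, one_mul, mul_assoc, map_sub, coeff_ofNat_mul, coeff_zero_X_mul,
      coeff_derivative, coeff_invSqrtGF]
    norm_num [Nat.centralBinom]
  · have h := congrArg (Nat.cast (R := ℚ)) (Nat.succ_mul_centralBinom_succ (n + 1))
    push_cast at h
    simp only [sub_mul, one_mul, mul_assoc, map_sub, coeff_derivative, coeff_invSqrtGF,
      Nat.cast_add, Nat.cast_one, coeff_ofNat_mul, coeff_succ_X_mul]
    linear_combination h

theorem invSqrtGF_sq_mul_one_sub_four_X : invSqrtGF ^ 2 * (1 - 4 * X) = 1 := by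
  refine derivative.ext ?_ (by simp [constantCoeff_invSqrtGF])
  have h4 : d⁄dX ℚ (1 - 4 * X) = -4 := by
    rw [show (4 : ℚ⟦X⟧) = C 4 from rfl]
    simp
  rw [Derivation.leibniz, Derivation.leibniz_pow, h4]
  simp only [smul_eq_mul, nsmul_eq_mul, Derivation.map_one_eq_zero]
  linear_combination (2 * invSqrtGF) * one_sub_four_X_mul_derivative_invSqrtGF

theorem invSqrtGF_mul_one_sub_two_X_mul_catalan : invSqrtGF * (1 - 2 * X * 𝒞) = 1 := by
  have hC := map_catalanSeries_eq ℚ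
  have hsq : (invSqrtGF * (1 - 2 * X * 𝒞)) ^ 2 = 1 := by
    linear_combination (-4 * X * invSqrtGF ^ 2) * hC + invSqrtGF_sq_mul_one_sub_four_X
  refine (sq_eq_one_iff.1 hsq).resolve_right fun h => ?_
  have := congrArg (constantCoeff) h
  norm_num [constantCoeff_invSqrtGF] at this

theorem X_pow_three_mul_two_mul_catalan_eq :
    X ^ 3 * (2 * (𝒞 ^ 4 * (1 - X * 𝒞 ^ 2)⁻¹)) = (1 - 3 * X) * invSqrtGF - (1 - X) := by
  have hC := map_catalanSeries_eq ℚ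
  have hB := invSqrtGF_mul_one_sub_two_X_mul_catalan
  have hu : (1 - X * 𝒞 ^ 2) * (1 - X * 𝒞 ^ 2)⁻¹ = 1 :=
    PowerSeries.mul_inv_cancel _ (by simp)
  -- After clearing the denominators `1 - X𝒞²` and `1 - 2X𝒞`, this is an identity modulo
  -- `𝒞 = 1 + X𝒞²`.
  have huB : (1 - X * 𝒞 ^ 2) * (1 - X * 𝒞 ^ 2)⁻¹ * (invSqrtGF * (1 - 2 * X * 𝒞)) = 1 := by
    rw [hu, hB, one_mul]
  linear_combination (1 - X * 𝒞 ^ 2)⁻¹ * invSqrtGF *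
      (-2 * X - 2 * X ^ 2 * 𝒞 + 2 * X ^ 2 * 𝒞 ^ 2 + 4 * X ^ 3 * 𝒞 ^ 3) * hC -
    2 * X ^ 3 * 𝒞 ^ 4 * (1 - X * 𝒞 ^ 2)⁻¹ * hB + (1 - 3 * X) * invSqrtGF * hu - (1 - X) * huB

/-- Σ_{n≥0} ap(n) x^n = (1/x^3)·((1-3x)/((1-x)·sqrt(1-4x)) − 1), stated with
denominators cleared: (1-x)·x^3·Σ ap(n)x^n = (1-3x)/sqrt(1-4x) − (1-x). -/
theorem ap_generating_function :
    (1 - (X : PowerSeries ℚ)) * X ^ 3 * PowerSeries.mk (fun n => (ap n : ℚ))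
      = (1 - 3 * X) * invSqrtGF - (1 - X) := by
  have hap : (1 - X) * PowerSeries.mk (fun n => (ap n : ℚ)) = 2 * (𝒞 ^ 4 * (1 - X * 𝒞 ^ 2)⁻¹) := by
    simp_rw [ap_eq_sum_range_coeff]
    exact one_sub_X_mul_mk_sum_range_coeff _
  rw [mul_right_comm, hap, mul_comm]
  exact X_pow_three_mul_two_mul_catalan_eq
end

section
/- The identity Σ_{k=0}^{n} binom(2n-2k+1, n-2k) = Σ_{k=0}^{n} binom(2k+1, n+1) holds for all n ≥ 0, where binom(a,b) = 0 if b < 0 or b > a. -/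
/-- Σ_{k=0}^{n} binom(2n-2k+1, n-2k) = Σ_{k=0}^{n} binom(2k+1, n+1), where a binomial
coefficient with negative lower index (i.e. when 2k > n) is zero. -/
theorem binom_sum_identity (n : ℕ) :
    (∑ k ∈ Finset.range (n + 1),
        if 2 * k ≤ n then Nat.choose (2 * n - 2 * k + 1) (n - 2 * k) else 0)
      = ∑ k ∈ Finset.range (n + 1), Nat.choose (2 * k + 1) (n + 1) := by
  rw [← Finset.sum_range_reflect]
  apply Finset.sum_congr rfl
  intro k hk
  simp only [Finset.mem_range] at hk
  by_cases h : n ≤ 2 * k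
  · have h1 : 2 * (n + 1 - 1 - k) ≤ n := by omega
    rw [if_pos h1]
    have h2 : 2 * n - 2 * (n + 1 - 1 - k) + 1 = 2 * k + 1 := by omega
    have h3 : n - 2 * (n + 1 - 1 - k) = (2 * k + 1) - (n + 1) := by omega
    rw [h2, h3]
    exact Nat.choose_symm (by omega)
  · have h1 : ¬ 2 * (n + 1 - 1 - k) ≤ n := by omega
    rw [if_neg h1, eq_comm]
    exact Nat.choose_eq_zero_of_lt (by omega)
end

section
/- The total number of symmetric peaks of weight k+1 over all Dyck paths of length 2(n+1) equals the total number of symmetric peaks of weight k+j+1 over all Dyck paths of length 2(n+j+1), for all j ≥ 1; i.e., there is a bijection between Dyck paths of length 2(n+1) with a distinguished symmetric peak of weight k+1 and Dyck paths of length 2(n+j+1) with a distinguished symmetric peak of weight k+j+1. -/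
/-- Dyck paths of length `m` with a distinguished symmetric peak of weight `w`:
a decomposition `A ++ u^w ++ d^w ++ B` where the runs `u^w` and `d^w` are maximal
(`A` does not end with an up step, `B` does not start with a down step). -/
def SymPeakMarkedW (m w : ℕ) : Type :=
  { q : List Bool × List Bool //
      q.1.getLast? ≠ some true ∧
      q.2.head? ≠ some false ∧
      IsDyck (q.1 ++ List.replicate w true ++ List.replicate w false ++ q.2) ∧
      (q.1 ++ List.replicate w true ++ List.replicate w false ++ q.2).length = m }

lemma prefix_append_cases {α : Type*} {q X Y : List α} (h : q <+: X ++ Y) :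
    q <+: X ∨ ∃ r, r <+: Y ∧ q = X ++ r := by
  rcases le_or_gt q.length X.length with hl | hl
  · exact Or.inl (List.prefix_of_prefix_length_le h (X.prefix_append Y) hl)
  · right
    have hX : X <+: q := List.prefix_of_prefix_length_le (X.prefix_append Y) h hl.le
    obtain ⟨r, rfl⟩ := hX
    obtain ⟨t, ht⟩ := h
    refine ⟨r, ⟨t, ?_⟩, rfl⟩
    simpa using ht

lemma dyck_transfer (A B : List Bool) (w w' : ℕ)
    (h : IsDyck (A ++ List.replicate w true ++ List.replicate w false ++ B)) :
    IsDyck (A ++ List.replicate w' true ++ List.replicate w' false ++ B) := by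
  obtain ⟨hnn, hcnt⟩ := h
  have hA : ∀ q : List Bool, q <+: A → q.count false ≤ q.count true := by
    intro q hq
    exact hnn q (hq.trans (((A.prefix_append _).trans (List.prefix_append _ _)).trans
      (List.prefix_append _ _)))
  have hA0 := hA A (List.prefix_refl A)
  constructor
  · intro q hq
    rcases prefix_append_cases hq with hq | ⟨r, hr, rfl⟩
    · rcases prefix_append_cases hq with hq | ⟨r, hr, rfl⟩
      · rcases prefix_append_cases hq with hq | ⟨r, hr, rfl⟩
        · exact hA q hq
        · obtain ⟨i, hi, rfl⟩ := List.sublist_replicate_iff.mp hr.sublist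
          simp [List.count_append, List.count_replicate]
          omega
      · obtain ⟨i, hi, rfl⟩ := List.sublist_replicate_iff.mp hr.sublist
        simp [List.count_append, List.count_replicate]
        omega
    · obtain ⟨t, rfl⟩ := hr
      have key := hnn (A ++ List.replicate w true ++ List.replicate w false ++ r)
        ⟨t, by simp⟩
      simp [List.count_append, List.count_replicate] at key ⊢
      omega
  · simp [List.count_append, List.count_replicate] at hcnt ⊢
    omega

/-- There is a bijection between Dyck paths of length 2(n+1) with a distinguished
symmetric peak of weight k+1 and Dyck paths of length 2(n+j+1) with a distinguished
symmetric peak of weight k+j+1, for all j ≥ 1; in particular the two counts agree. -/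
theorem sym_peak_weight_bijection (n k j : ℕ) (hj : 1 ≤ j) :
    Nonempty (SymPeakMarkedW (2 * (n + 1)) (k + 1) ≃
      SymPeakMarkedW (2 * (n + j + 1)) (k + j + 1)) ∧
    Nat.card (SymPeakMarkedW (2 * (n + 1)) (k + 1))
      = Nat.card (SymPeakMarkedW (2 * (n + j + 1)) (k + j + 1)) := by
  have e : SymPeakMarkedW (2 * (n + 1)) (k + 1) ≃
      SymPeakMarkedW (2 * (n + j + 1)) (k + j + 1) :=
    { toFun := fun x =>
        ⟨x.1, x.2.1, x.2.2.1, dyck_transfer _ _ _ _ x.2.2.2.1, by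
          have h4 := x.2.2.2.2
          simp [List.length_append, List.length_replicate] at h4 ⊢; omega⟩
      invFun := fun x =>
        ⟨x.1, x.2.1, x.2.2.1, dyck_transfer _ _ _ _ x.2.2.2.1, by
          have h4 := x.2.2.2.2
          simp [List.length_append, List.length_replicate] at h4 ⊢; omega⟩
      left_inv := fun x => Subtype.ext rfl
      right_inv := fun x => Subtype.ext rfl }
  exact ⟨⟨e⟩, Nat.card_congr e⟩
end

section
/- The number of Dyck paths of length 2(n+1) with a distinguished symmetric peak of weight 1 equals the number of pairs (F, D), where F is either the empty path or a free Dyck path (from (0,0) to (2m,0), allowed to go below the x-axis) starting with ud, D is a Dyck path, and the total length of F and D is 2n. -/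
/-- Dyck paths of length `m` with a distinguished symmetric peak of weight 1:
a decomposition `A ++ [u, d] ++ B` where `A` does not end with an up step and
`B` does not start with a down step (so the mountain `ud` is maximal). -/
def SymPeak1Marked (m : ℕ) : Type :=
  { q : List Bool × List Bool //
      q.1.getLast? ≠ some true ∧
      q.2.head? ≠ some false ∧
      IsDyck (q.1 ++ [true, false] ++ q.2) ∧
      (q.1 ++ [true, false] ++ q.2).length = m }

/-- Pairs (F, D) where F is empty or a free Dyck path (equal numbers of up and
down steps, may go below the x-axis) starting with `ud`, D is a Dyck path, and the
total length of F and D is `m`. -/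
def FreePairs (m : ℕ) : Type :=
  { q : List Bool × List Bool //
      (q.1 = [] ∨ (q.1.count true = q.1.count false ∧ [true, false] <+: q.1)) ∧
      IsDyck q.2 ∧
      q.1.length + q.2.length = m }

theorem Nat.card_eq_of_forall_existsUnique {α β : Type*} {r : α → β → Prop}
    (hl : ∀ a, ∃! b, r a b) (hr : ∀ b, ∃! a, r a b) : Nat.card α = Nat.card β := by
  obtain ⟨f, hf⟩ := forall_existsUnique_iff.mp hl
  refine Nat.card_eq_of_bijective f ⟨fun a a' h => ?_, fun b => ?_⟩
  · exact (hr (f a')).unique (hf.mpr h) (hf.mpr rfl)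
  · obtain ⟨a, ha, -⟩ := hr b
    exact ⟨a, hf.mp ha⟩

namespace DyckPath

def height (p : List Bool) : ℤ := p.count true - p.count false

@[simp] lemma height_nil : height [] = 0 := rfl

@[simp] lemma height_append (p q : List Bool) : height (p ++ q) = height p + height q := by
  simp only [height, List.count_append, Nat.cast_add]
  ring

@[simp] lemma height_cons_true (p : List Bool) : height (true :: p) = height p + 1 := by
  rw [← List.singleton_append, height_append, add_comm]
  rfl

@[simp] lemma height_cons_false (p : List Bool) : height (false :: p) = height p - 1 := by
  rw [← List.singleton_append, height_append, add_comm, sub_eq_add_neg]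
  rfl

lemma height_eq_zero_iff {p : List Bool} : height p = 0 ↔ p.count true = p.count false := by
  simp [height, sub_eq_zero]

def NeverBelow (c : ℤ) (p : List Bool) : Prop := ∀ q, q <+: p → c ≤ height q

lemma NeverBelow.le_height {c : ℤ} {p : List Bool} (h : NeverBelow c p) : c ≤ height p :=
  h p List.prefix_rfl

lemma NeverBelow.mono {c c' : ℤ} {p : List Bool} (h : NeverBelow c p) (hc : c' ≤ c) :
    NeverBelow c' p :=
  fun q hq => hc.trans (h q hq)

lemma NeverBelow.of_prefix {c : ℤ} {p q : List Bool} (h : NeverBelow c p) (hq : q <+: p) :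
    NeverBelow c q :=
  fun r hr => h r (hr.trans hq)

@[simp] lemma neverBelow_nil {c : ℤ} : NeverBelow c [] ↔ c ≤ 0 := by
  simp [NeverBelow]

@[simp] lemma neverBelow_cons {c : ℤ} {b : Bool} {p : List Bool} :
    NeverBelow c (b :: p) ↔ c ≤ 0 ∧ NeverBelow (c - height [b]) p := by
  have hb (q : List Bool) : height (b :: q) = height [b] + height q := height_append [b] q
  simp only [NeverBelow, List.prefix_cons_iff, forall_eq_or_imp, height_nil]
  constructor
  · rintro ⟨h0, h⟩
    exact ⟨h0, fun q hq => by linarith [hb q, h (b :: q) ⟨q, rfl, hq⟩]⟩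
  · rintro ⟨h0, h⟩
    refine ⟨h0, fun q ⟨t, hqt, ht⟩ => ?_⟩
    subst hqt
    linarith [hb t, h t ht]

lemma neverBelow_append {c : ℤ} {p q : List Bool} :
    NeverBelow c (p ++ q) ↔ NeverBelow c p ∧ NeverBelow (c - height p) q := by
  induction p generalizing c with
  | nil =>
    simp only [List.nil_append, neverBelow_nil, height_nil, sub_zero]
    exact ⟨fun h => ⟨by simpa using h [] List.nil_prefix, h⟩, And.right⟩
  | cons b p ih =>
    simp only [List.cons_append, neverBelow_cons, ih, and_assoc]
    have := height_append [b] p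
    simp_all [sub_sub]

lemma NeverBelow.head?_ne_false {p : List Bool} (h : NeverBelow 0 p) : p.head? ≠ some false := by
  rcases p with _ | ⟨_ | _, p⟩
  · simp
  · simpa using (neverBelow_cons.mp h).2 [] List.nil_prefix
  · simp

lemma NeverBelow.append_cons_true {X Z : List Bool} (hX : NeverBelow (height X) X)
    (hZ : NeverBelow 0 Z) : NeverBelow (height X) (X ++ true :: Z) := by
  simpa [neverBelow_append, hX] using hZ.mono (by norm_num)

lemma dyckNonneg_iff {p : List Bool} : DyckNonneg p ↔ NeverBelow 0 p := by
  simp [DyckNonneg, NeverBelow, height]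

lemma isDyck_iff {p : List Bool} : IsDyck p ↔ NeverBelow 0 p ∧ height p = 0 := by
  rw [IsDyck, dyckNonneg_iff, height_eq_zero_iff]

lemma exists_split_at_last_visit {p x : List Bool} {c : ℤ} (hx : x <+: p) (hxc : height x ≤ c)
    (hc : c < height p) : ∃ X Z, p = X ++ true :: Z ∧ height X = c ∧ NeverBelow 0 Z := by
  induction p using List.reverseRecOn with
  | nil =>
    obtain rfl := List.prefix_nil.mp hx
    simp only [height_nil] at hxc hc
    omega
  | append_singleton p b ih =>
    by_cases hb : b = true ∧ height p = c
    · obtain ⟨rfl, rfl⟩ := hb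
      exact ⟨p, [], rfl, rfl, by simp⟩
    have hcp : c < height p := by
      cases b
      · simp only [height_append, height_cons_false, height_nil] at hc
        linarith
      · simp only [height_append, height_cons_true, height_nil, true_and] at hc hb
        omega
    have hxp : x <+: p := by
      rcases List.prefix_concat_iff.mp hx with rfl | h
      · omega
      · exact h
    obtain ⟨X, Z, rfl, hX, hZ⟩ := ih hxp hcp
    refine ⟨X, Z ++ [b], by simp, hX, neverBelow_append.mpr ⟨hZ, ?_⟩⟩
    simp only [height_append, height_cons_true] at hc hcp
    simp only [neverBelow_cons, neverBelow_nil]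
    omega

lemma length_le_of_append_cons_true_eq {X Z X' Z' : List Bool}
    (h : X ++ true :: Z = X' ++ true :: Z') (hX : height X = height X') (hZ : NeverBelow 0 Z) :
    X'.length ≤ X.length := by
  rcases List.append_eq_append_iff.mp h with ⟨T, rfl, hT⟩ | ⟨T, rfl, -⟩
  · rcases T with _ | ⟨b, T⟩
    · simp
    · obtain ⟨rfl, rfl⟩ := List.cons_eq_cons.mp hT
      have := (hZ.of_prefix (List.prefix_append T _)).le_height
      simp only [height_append, height_cons_true] at hX
      omega
  · simp

lemma append_cons_true_inj {X Z X' Z' : List Bool} (h : X ++ true :: Z = X' ++ true :: Z')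
    (hX : height X = height X') (hZ : NeverBelow 0 Z) (hZ' : NeverBelow 0 Z') :
    X = X' ∧ Z = Z' := by
  have hlen := le_antisymm (length_le_of_append_cons_true_eq h.symm hX.symm hZ')
    (length_le_of_append_cons_true_eq h hX hZ)
  obtain ⟨hXX, hZZ⟩ := List.append_inj h hlen
  exact ⟨hXX, List.cons_injective hZZ⟩

lemma exists_prefix_neverBelow_height (p : List Bool) :
    ∃ x, x <+: p ∧ NeverBelow (height x) p := by
  obtain ⟨x, hx, hmin⟩ := p.inits.toFinset.exists_min_image height ⟨[], by simp⟩
  exact ⟨x, by simpa using hx, fun q hq => hmin q (by simpa using hq)⟩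

lemma exists_eq_append_cons_true_isDyck {p : List Bool} (hp : 0 < height p) :
    ∃ Y W, p = Y ++ true :: W ∧ height Y = height p - 1 ∧ IsDyck W := by
  obtain ⟨Y, W, rfl, hY, hW⟩ :=
    exists_split_at_last_visit (List.nil_prefix (l := p)) (by rw [height_nil]; linarith)
      (sub_one_lt (height p))
  refine ⟨Y, W, rfl, hY, isDyck_iff.mpr ⟨hW, ?_⟩⟩
  simp only [height_append, height_cons_true] at hY
  linarith

lemma append_cons_true_append_false_inj {Y D Y' D' : List Bool}
    (h : Y ++ true :: D ++ [false] = Y' ++ true :: D' ++ [false]) (hD : IsDyck D)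
    (hD' : IsDyck D') : Y = Y' ∧ D = D' := by
  replace h : Y ++ true :: D = Y' ++ true :: D' :=
    (List.append_left_inj [false]).mp (by simpa using h)
  have hh := congrArg height h
  simp only [height_append, height_cons_true, (isDyck_iff.mp hD).2,
    (isDyck_iff.mp hD').2] at hh
  exact append_cons_true_inj h (by linarith) (isDyck_iff.mp hD).1 (isDyck_iff.mp hD').1

/-- `Corr (F, D) (A, B)`: the pair `(F, D)` corresponds to the marked path `A·ud·B`. -/
inductive Corr : List Bool × List Bool → List Bool × List Bool → Prop
  | nil {D : List Bool} : IsDyck D → Corr ([], D) ([], D)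
  | dyck {Y D : List Bool} : IsDyck Y → IsDyck D →
      Corr (true :: false :: Y, D) (Y ++ true :: D ++ [false], [])
  | split {X Z D : List Bool} : NeverBelow (height X) X → NeverBelow 0 Z →
      height X + 1 + height Z = 0 → IsDyck D →
      Corr (true :: false :: (X ++ true :: Z), D) (Z ++ true :: D ++ [false], true :: X)

namespace Corr

variable {x y : List Bool × List Bool}

lemma mem_freePairs (h : Corr x y) {m : ℕ} (hy : (y.1 ++ [true, false] ++ y.2).length = m + 2) :
    (x.1 = [] ∨ (x.1.count true = x.1.count false ∧ [true, false] <+: x.1)) ∧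
      IsDyck x.2 ∧ x.1.length + x.2.length = m := by
  cases h with
  | nil hD => exact ⟨.inl rfl, hD, by simpa using hy⟩
  | @dyck Y D hY hD =>
    refine ⟨.inr ⟨height_eq_zero_iff.mp ?_, Y, rfl⟩, hD, ?_⟩
    · simpa using (isDyck_iff.mp hY).2
    · simp only [List.length_append, List.length_cons, List.length_nil] at hy ⊢
      omega
  | @split X Z D hX hZ hXZ hD =>
    refine ⟨.inr ⟨height_eq_zero_iff.mp ?_, X ++ true :: Z, rfl⟩, hD, ?_⟩
    · simp only [height_append, height_cons_true, height_cons_false]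
      linarith
    · simp only [List.length_append, List.length_cons, List.length_nil] at hy ⊢
      omega

lemma mem_symPeak (h : Corr x y) {m : ℕ} (hx : x.1.length + x.2.length = m) :
    y.1.getLast? ≠ some true ∧ y.2.head? ≠ some false ∧
      IsDyck (y.1 ++ [true, false] ++ y.2) ∧ (y.1 ++ [true, false] ++ y.2).length = m + 2 := by
  cases h with
  | nil hD =>
    obtain ⟨hD0, hDh⟩ := isDyck_iff.mp hD
    refine ⟨by simp, hD0.head?_ne_false, isDyck_iff.mpr ?_, by simpa using hx⟩
    simpa [neverBelow_append, hDh] using hD0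
  | @dyck Y D hY hD =>
    obtain ⟨hY0, hYh⟩ := isDyck_iff.mp hY
    obtain ⟨hD0, hDh⟩ := isDyck_iff.mp hD
    refine ⟨by rw [List.getLast?_append]; simp, by simp, isDyck_iff.mpr ?_, ?_⟩
    · simp only [List.append_assoc, List.cons_append, List.nil_append, List.append_nil,
        neverBelow_append, neverBelow_cons, neverBelow_nil, height_append, height_cons_true,
        height_cons_false, height_nil, hYh, hDh]
      refine ⟨⟨hY0, ?_, hD0.mono ?_, ?_, ?_, ?_, ?_⟩, ?_⟩ <;> norm_num
    · simp only [List.length_append, List.length_cons, List.length_nil] at hx ⊢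
      omega
  | @split X Z D hX hZ hXZ hD =>
    obtain ⟨hD0, hDh⟩ := isDyck_iff.mp hD
    refine ⟨by rw [List.getLast?_append]; simp, by simp, isDyck_iff.mpr ?_, ?_⟩
    · have hZh := hZ.le_height
      simp only [List.append_assoc, List.cons_append, List.nil_append, neverBelow_append,
        neverBelow_cons, height_append, height_cons_true, height_cons_false, height_nil, hDh]
      refine ⟨⟨hZ, ?_, hD0.mono ?_, ?_, ?_, ?_, ?_, hX.mono ?_⟩, ?_⟩ <;> linarith
    · simp only [List.length_append, List.length_cons, List.length_nil] at hx ⊢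
      omega

lemma right_unique {y' : List Bool × List Bool} (h : Corr x y) (h' : Corr x y') : y = y' := by
  cases h with
  | nil => cases h'; rfl
  | @dyck Y D hY =>
    cases h' with
    | dyck => rfl
    | @split X Z _ _ hZ hXZ =>
      have := ((isDyck_iff.mp hY).1.of_prefix (List.prefix_append X _)).le_height
      linarith [hZ.le_height]
  | @split X Z D hX hZ hXZ =>
    generalize hG : X ++ true :: Z = G at h'
    cases h' with
    | dyck hY =>
      have := ((isDyck_iff.mp hY).1.of_prefix (hG ▸ List.prefix_append X _)).le_height
      linarith [hZ.le_height]
    | @split X' Z' _ hX' hZ' =>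
      have hle := (hX.append_cons_true hZ) X' (hG ▸ List.prefix_append X' _)
      have hge := (hX'.append_cons_true hZ') X (hG ▸ List.prefix_append X _)
      obtain ⟨rfl, rfl⟩ := append_cons_true_inj hG (le_antisymm hle hge) hZ hZ'
      rfl

lemma left_unique {x' : List Bool × List Bool} (h : Corr x y) (h' : Corr x' y) : x = x' := by
  generalize hy : y = y' at h'
  cases h with
  | nil => cases h' <;> simp_all
  | @dyck Y D _ hD =>
    cases h' with
    | @dyck Y' D' _ hD' =>
      obtain ⟨rfl, rfl⟩ := append_cons_true_append_false_inj (Prod.ext_iff.mp hy).1 hD hD'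
      rfl
    | _ => simp at hy
  | @split X Z D _ _ _ hD =>
    cases h' with
    | @split X' Z' D' _ _ _ hD' =>
      obtain ⟨hA, hB⟩ := Prod.ext_iff.mp hy
      obtain ⟨rfl, rfl⟩ := append_cons_true_append_false_inj hA hD hD'
      cases hB
      rfl
    | _ => simp at hy

end Corr

lemma exists_corr_of_freePair {F D : List Bool}
    (hF : F = [] ∨ (F.count true = F.count false ∧ [true, false] <+: F)) (hD : IsDyck D) :
    ∃ y, Corr (F, D) y := by
  rcases hF with rfl | ⟨hF0, G, rfl⟩
  · exact ⟨_, .nil hD⟩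
  have hG : height G = 0 := by simpa using height_eq_zero_iff.mpr hF0
  by_cases hG0 : NeverBelow 0 G
  · exact ⟨_, .dyck (isDyck_iff.mpr ⟨hG0, hG⟩) hD⟩
  obtain ⟨m, hm, hmin⟩ := exists_prefix_neverBelow_height G
  have hneg : height m < 0 := by
    by_contra! hm0
    exact hG0 (hmin.mono hm0)
  obtain ⟨X, Z, rfl, hX, hZ⟩ := exists_split_at_last_visit hm le_rfl (hG ▸ hneg)
  refine ⟨_, .split (hX ▸ hmin.of_prefix (List.prefix_append X _)) hZ ?_ hD⟩
  simp only [height_append, height_cons_true] at hG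
  linarith

lemma exists_corr_of_symPeak {A B : List Bool} (hA : A.getLast? ≠ some true)
    (hB : B.head? ≠ some false) (hP : IsDyck (A ++ [true, false] ++ B)) :
    ∃ x, Corr x (A, B) := by
  obtain ⟨hP0, hPh⟩ := isDyck_iff.mp hP
  rcases A.eq_nil_or_concat' with rfl | ⟨A, b, rfl⟩
  · refine ⟨_, .nil (isDyck_iff.mpr ⟨?_, by simpa using hPh⟩)⟩
    simpa using hP0
  obtain rfl : b = false := by simpa using hA
  have hA0 : 0 < height A := by
    have := (hP0.of_prefix ((List.prefix_append _ _).trans (List.prefix_append _ _))).le_height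
    simp only [height_append, height_cons_false, height_nil] at this
    linarith
  obtain ⟨Y, W, rfl, hY, hW⟩ := exists_eq_append_cons_true_isDyck hA0
  have hY0 : NeverBelow 0 Y := hP0.of_prefix (by simp)
  rcases B with _ | ⟨_ | _, X⟩
  · refine ⟨_, .dyck (isDyck_iff.mpr ⟨hY0, ?_⟩) hW⟩
    simp only [height_append, height_cons_true, height_cons_false, height_nil,
      (isDyck_iff.mp hW).2] at hPh hY
    linarith
  · simp at hB
  · have hX := (neverBelow_cons.mp (neverBelow_append.mp hP0).2).2
    simp only [height_append, height_cons_true, height_cons_false, height_nil] at hX hPh hY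
    refine ⟨_, .split (hX.mono ?_) hY0 ?_ hW⟩ <;> linarith

end DyckPath

open DyckPath

/-- The number of Dyck paths of length 2(n+1) with a distinguished symmetric peak of
weight 1 equals the number of pairs (F, D) as above with total length 2n. -/
theorem sym_peak_free_pair_count (n : ℕ) :
    Nat.card (SymPeak1Marked (2 * (n + 1))) = Nat.card (FreePairs (2 * n)) := by
  symm
  refine Nat.card_eq_of_forall_existsUnique
    (r := fun (x : FreePairs (2 * n)) (y : SymPeak1Marked (2 * n + 2)) => Corr x.1 y.1)
    (fun x => ?_) (fun y => ?_)
  · obtain ⟨y, hy⟩ := exists_corr_of_freePair x.2.1 x.2.2.1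
    exact ⟨⟨y, hy.mem_symPeak x.2.2.2⟩, hy, fun y' hy' => Subtype.ext (hy'.right_unique hy)⟩
  · obtain ⟨⟨A, B⟩, hA, hB, hP, hlen⟩ := y
    obtain ⟨x, hx⟩ := exists_corr_of_symPeak hA hB hP
    exact ⟨⟨x, hx.mem_freePairs hlen⟩, hx, fun x' hx' => Subtype.ext (hx'.left_unique hx)⟩
end

section
/- The number of Dyck paths of length 2(n+3) with a distinguished left asymmetric peak of weight 1 equals binom(2n+3, n). -/
/-- Dyck paths of length `m` with a distinguished left asymmetric peak of weight 1:
a decomposition `A ++ u^a ++ [d] ++ B` with `a ≥ 2`, where the run `u^a` is maximal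
(`A` does not end with an up step) and the run `d` is maximal (`B` does not start
with a down step). -/
def LeftAsymPeak1Marked (m : ℕ) : Type :=
  { q : List Bool × ℕ × List Bool //
      2 ≤ q.2.1 ∧
      q.1.getLast? ≠ some true ∧
      q.2.2.head? ≠ some false ∧
      IsDyck (q.1 ++ List.replicate q.2.1 true ++ [false] ++ q.2.2) ∧
      (q.1 ++ List.replicate q.2.1 true ++ [false] ++ q.2.2).length = m }

/-!
A left asymmetric peak of weight 1 is a factor `u^a d` with `a ≥ 2`, maximal on both sides. The
path cannot end right after it (it would end at height at least `a - 1 > 0`), so the next step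
is `u`, and marking such a peak is the same as marking an occurrence of the factor `uudu`:
writing the path as `X uudu Y`, the peak is recovered by stripping the trailing `u`s from `X u u`.

Let `rc` (`revCompl`) be reversal followed by complementation. The map
`X uudu Y ↦ rc X · u · rc Y` sends these paths of length `2n + 6` to words of length `2n + 3`
ending at height 3, i.e. with `n` down steps. The Dyck conditions say exactly that `rc X` ends at
its minimum height and that `rc Y` stays nonnegative; conversely, a word ending strictly above its
minimum is `P · u · Q` with `P` ending at its minimum and `Q` nonnegative in exactly one way,
namely with `P` stopping at the last time the word attains its minimum.
-/

namespace LeftAsymPeak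

open List

section Prefixes

variable {α : Type*} {P : List α → Prop}

lemma forall_prefix_append {l₁ l₂ : List α} :
    (∀ q, q <+: l₁ ++ l₂ → P q) ↔ (∀ q, q <+: l₁ → P q) ∧ ∀ q, q <+: l₂ → P (l₁ ++ q) := by
  refine ⟨fun h => ⟨fun q hq => h q (hq.trans (prefix_append _ _)),
    fun q hq => h _ ((prefix_append_right_inj l₁).2 hq)⟩, ?_⟩
  rintro ⟨h₁, h₂⟩ q hq
  rcases prefix_or_prefix_of_prefix hq (prefix_append l₁ l₂) with hq₁ | ⟨r, rfl⟩
  · exact h₁ q hq₁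
  · exact h₂ r ((prefix_append_right_inj l₁).1 hq)

lemma forall_prefix_cons {a : α} {l : List α} :
    (∀ q, q <+: a :: l → P q) ↔ P [] ∧ ∀ q, q <+: l → P (a :: q) := by
  simp only [prefix_cons_iff]
  constructor
  · intro h
    exact ⟨h [] (Or.inl rfl), fun q hq => h _ (Or.inr ⟨q, rfl, hq⟩)⟩
  · rintro ⟨h₀, h⟩ q (rfl | ⟨t, rfl, ht⟩)
    exacts [h₀, h t ht]

lemma forall_prefix_nil : (∀ q, q <+: ([] : List α) → P q) ↔ P [] := by
  simp

end Prefixes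

def height (l : List Bool) : ℤ := l.count true - l.count false

@[simp] lemma height_nil : height [] = 0 := rfl

@[simp] lemma height_cons_true (l : List Bool) : height (true :: l) = height l + 1 := by
  simp only [height, count_cons_self, count_cons_of_ne Bool.false_ne_true.symm, Nat.cast_succ]
  ring

@[simp] lemma height_cons_false (l : List Bool) : height (false :: l) = height l - 1 := by
  simp only [height, count_cons_self, count_cons_of_ne Bool.false_ne_true, Nat.cast_succ]
  ring

@[simp] lemma height_replicate_true (k : ℕ) : height (replicate k true) = k := by
  simp [height, count_replicate]

@[simp] lemma height_append (l₁ l₂ : List Bool) :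
    height (l₁ ++ l₂) = height l₁ + height l₂ := by
  simp only [height, count_append, Nat.cast_add]
  ring

lemma two_mul_count_false (l : List Bool) : 2 * (l.count false : ℤ) = l.length - height l := by
  rw [height, ← count_true_add_count_false l, Nat.cast_add]
  ring

lemma dyckNonneg_iff {p : List Bool} : DyckNonneg p ↔ ∀ q, q <+: p → 0 ≤ height q := by
  simp only [DyckNonneg, height, sub_nonneg, Nat.cast_le]

lemma isDyck_iff {p : List Bool} : IsDyck p ↔ DyckNonneg p ∧ height p = 0 := by
  simp only [IsDyck, height, sub_eq_zero, Nat.cast_inj]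

def EndsAtMin (p : List Bool) : Prop := ∀ q, q <+: p → height p ≤ height q

lemma EndsAtMin.append_isDyck {P R : List Bool} (hP : EndsAtMin P) (hR : IsDyck R) :
    EndsAtMin (P ++ R) := by
  rw [isDyck_iff, dyckNonneg_iff] at hR
  rw [EndsAtMin, forall_prefix_append, height_append, hR.2, add_zero]
  exact ⟨hP, fun q hq => by simpa using hR.1 q hq⟩

lemma EndsAtMin.concat_false {P : List Bool} (hP : EndsAtMin P) : EndsAtMin (P ++ [false]) := by
  intro q hq
  rcases prefix_concat_iff.1 hq with rfl | hq
  · rfl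
  · have := hP q hq
    simp only [height_append, height_cons_false, height_nil]
    linarith

lemma isDyck_true_cons_concat_false {Q : List Bool} (hQ : DyckNonneg Q) (h : height Q = 0) :
    IsDyck (true :: Q ++ [false]) := by
  rw [dyckNonneg_iff] at hQ
  simp only [isDyck_iff, dyckNonneg_iff, cons_append, forall_prefix_cons, forall_prefix_append,
    forall_prefix_nil, height_cons_true, height_cons_false, height_append, height_nil, h]
  exact ⟨⟨le_rfl, fun q hq => by linarith [hQ q hq], by norm_num, by norm_num⟩, by norm_num⟩

lemma exists_split_of_not_endsAtMin {w : List Bool} (hw : ¬EndsAtMin w) :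
    ∃ P Q, w = P ++ true :: Q ∧ EndsAtMin P ∧ DyckNonneg Q := by
  induction w using List.reverseRecOn with
  | nil => exact absurd (fun q hq => by rw [prefix_nil.1 hq]) hw
  | append_singleton v b ih =>
    by_cases hv : EndsAtMin v
    · cases b
      · exact absurd hv.concat_false hw
      · exact ⟨v, [], rfl, hv, by simp [DyckNonneg]⟩
    · obtain ⟨P, Q, rfl, hP, hQ⟩ := ih hv
      refine ⟨P, Q ++ [b], by simp, hP, ?_⟩
      have hQ' := dyckNonneg_iff.1 hQ
      rw [dyckNonneg_iff, forall_prefix_append, forall_prefix_cons, forall_prefix_nil]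
      refine ⟨hQ', ?_⟩
      by_contra hneg
      have hQ0 := hQ' Q (prefix_refl Q)
      cases b
      · -- `u Q d` is then a Dyck path, so `w` would end at its minimum
        have h0 : height Q = 0 := by
          simp only [append_nil, height_append, height_cons_false, height_nil] at hneg
          omega
        exact hw (by simpa using hP.append_isDyck (isDyck_true_cons_concat_false hQ h0))
      · simp only [append_nil, height_append, height_cons_true, height_nil] at hneg
        omega

lemma eq_of_split_of_length_le {P₁ Q₁ P₂ Q₂ : List Bool}
    (h : P₁ ++ true :: Q₁ = P₂ ++ true :: Q₂) (hQ₁ : DyckNonneg Q₁) (hP₂ : EndsAtMin P₂)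
    (hle : P₁.length ≤ P₂.length) : P₁ = P₂ := by
  obtain ⟨S, rfl⟩ : P₁ <+: P₂ :=
    prefix_of_prefix_length_le (prefix_append _ _) ⟨true :: Q₂, h.symm⟩ hle
  rw [append_assoc, append_cancel_left_eq] at h
  cases S with
  | nil => simp
  | cons s S =>
    obtain ⟨rfl, rfl⟩ := cons_eq_cons.1 h
    have hS := dyckNonneg_iff.1 hQ₁ S (prefix_append _ _)
    have hmin := hP₂ P₁ (prefix_append _ _)
    simp only [height_append, height_cons_true] at hmin
    linarith

lemma split_unique {P₁ Q₁ P₂ Q₂ : List Bool} (h : P₁ ++ true :: Q₁ = P₂ ++ true :: Q₂)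
    (hP₁ : EndsAtMin P₁) (hQ₁ : DyckNonneg Q₁) (hP₂ : EndsAtMin P₂) (hQ₂ : DyckNonneg Q₂) :
    P₁ = P₂ ∧ Q₁ = Q₂ := by
  have hP : P₁ = P₂ := by
    rcases le_total P₁.length P₂.length with hle | hle
    · exact eq_of_split_of_length_le h hQ₁ hP₂ hle
    · exact (eq_of_split_of_length_le h.symm hQ₂ hP₁ hle).symm
  subst hP
  simpa using h

def revCompl (l : List Bool) : List Bool := (l.map not).reverse

@[simp] lemma revCompl_revCompl (l : List Bool) : revCompl (revCompl l) = l := by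
  simp [revCompl, map_reverse, Function.comp_def]

@[simp] lemma revCompl_append (l₁ l₂ : List Bool) :
    revCompl (l₁ ++ l₂) = revCompl l₂ ++ revCompl l₁ := by
  simp [revCompl]

@[simp] lemma length_revCompl (l : List Bool) : (revCompl l).length = l.length := by
  simp [revCompl]

@[simp] lemma height_revCompl (l : List Bool) : height (revCompl l) = -height l := by
  induction l with
  | nil => rfl
  | cons b l ih => cases b <;> simp_all [revCompl] <;> ring

lemma revCompl_injective : Function.Injective revCompl :=
  Function.LeftInverse.injective revCompl_revCompl

/-- Prefixes of `revCompl l` are the reverse complements of suffixes of `l`. -/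
lemma forall_prefix_revCompl {P : ℤ → Prop} {l : List Bool} :
    (∀ q, q <+: revCompl l → P (height q)) ↔ ∀ t, t <+: l → P (height t - height l) := by
  constructor
  · rintro h t ⟨s, rfl⟩
    convert h (revCompl s) ⟨revCompl t, (revCompl_append t s).symm⟩ using 1
    simp
  · rintro h q ⟨r, hr⟩
    have hl : l = revCompl r ++ revCompl q := by rw [← revCompl_append, hr, revCompl_revCompl]
    convert h (revCompl r) ⟨revCompl q, hl.symm⟩ using 1
    rw [hl]
    simp

lemma endsAtMin_revCompl_iff {l : List Bool} : EndsAtMin (revCompl l) ↔ DyckNonneg l := by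
  simp only [EndsAtMin, dyckNonneg_iff, height_revCompl]
  exact (forall_prefix_revCompl (P := (-height l ≤ ·))).trans (by simp)

lemma dyckNonneg_revCompl_iff {l : List Bool} : DyckNonneg (revCompl l) ↔ EndsAtMin l := by
  rw [← endsAtMin_revCompl_iff, revCompl_revCompl]

lemma isDyck_uudu_iff {X Y : List Bool} :
    IsDyck (X ++ [true, true, false, true] ++ Y) ↔
      DyckNonneg X ∧ EndsAtMin Y ∧ height X + height Y = -2 := by
  simp only [isDyck_iff, EndsAtMin, dyckNonneg_iff, forall_prefix_append, forall_prefix_cons,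
    forall_prefix_nil, height_append, height_cons_true, height_cons_false, height_nil]
  constructor
  · rintro ⟨⟨⟨hX, -⟩, hY⟩, h⟩
    exact ⟨hX, fun q hq => by linarith [hY q hq], by linarith⟩
  · rintro ⟨hX, hY, h⟩
    have := hX X (prefix_refl X)
    exact ⟨⟨⟨hX, by omega⟩, fun q hq => by linarith [hY q hq]⟩, by linarith⟩

lemma rdropWhile_append_replicate {A : List Bool} (hA : A.getLast? ≠ some true) (k : ℕ) :
    (A ++ replicate k true).rdropWhile id = A := by
  induction k with
  | zero =>
    rw [replicate_zero, append_nil, rdropWhile_eq_self_iff]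
    intro hne hlast
    exact hA (by rw [getLast?_eq_some_getLast hne]; simpa using hlast)
  | succ k ih => rw [replicate_succ', ← append_assoc, rdropWhile_concat_pos _ _ _ rfl, ih]

lemma getLast?_rdropWhile_ne (l : List Bool) : (l.rdropWhile id).getLast? ≠ some true := by
  intro h
  have hne : l.rdropWhile id ≠ [] := by
    rintro h'
    simp [h'] at h
  rw [getLast?_eq_some_getLast hne] at h
  exact rdropWhile_last_not _ _ hne (by simpa using h)

lemma eq_rdropWhile_append_replicate (l : List Bool) :
    l = l.rdropWhile id ++ replicate (l.rtakeWhile id).length true := by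
  conv_lhs => rw [← rdropWhile_append_rtakeWhile (p := id) (l := l)]
  congr 1
  exact eq_replicate_iff.2 ⟨rfl, fun b hb => mem_rtakeWhile_imp hb⟩

lemma eq_true_cons_tail_of_isDyck {A B : List Bool} {a : ℕ} (ha : 2 ≤ a)
    (hB : B.head? ≠ some false) (hd : IsDyck (A ++ replicate a true ++ [false] ++ B)) :
    B = true :: B.tail := by
  cases B with
  | nil =>
    obtain ⟨hnn, h0⟩ := isDyck_iff.1 hd
    have hA := dyckNonneg_iff.1 hnn A (by simp)
    simp only [append_nil, height_append, height_replicate_true, height_cons_false,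
      height_nil] at h0
    omega
  | cons b B => cases b <;> simp_all

lemma peakWord_eq_uudu {A B : List Bool} {a : ℕ} (ha : 2 ≤ a) (hB : B = true :: B.tail) :
    A ++ replicate a true ++ [false] ++ B =
      (A ++ replicate (a - 2) true) ++ [true, true, false, true] ++ B.tail := by
  obtain ⟨k, rfl⟩ := Nat.exists_eq_add_of_le' ha
  rw [hB]
  simp [replicate_add]

lemma peak_eq_of_uudu_eq {A₁ A₂ B₁ B₂ : List Bool} {a₁ a₂ : ℕ}
    (ha₁ : 2 ≤ a₁) (hA₁ : A₁.getLast? ≠ some true) (hB₁ : B₁.head? ≠ some false)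
    (hd₁ : IsDyck (A₁ ++ replicate a₁ true ++ [false] ++ B₁))
    (ha₂ : 2 ≤ a₂) (hA₂ : A₂.getLast? ≠ some true) (hB₂ : B₂.head? ≠ some false)
    (hd₂ : IsDyck (A₂ ++ replicate a₂ true ++ [false] ++ B₂))
    (hX : A₁ ++ replicate (a₁ - 2) true = A₂ ++ replicate (a₂ - 2) true)
    (hY : B₁.tail = B₂.tail) :
    A₁ = A₂ ∧ a₁ = a₂ ∧ B₁ = B₂ := by
  have hA : A₁ = A₂ := by
    rw [← rdropWhile_append_replicate hA₁ (a₁ - 2), hX, rdropWhile_append_replicate hA₂]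
  subst hA
  refine ⟨rfl, ?_, ?_⟩
  · have := congrArg length hX
    simp only [length_append, length_replicate, Nat.add_left_cancel_iff] at this
    omega
  · rw [eq_true_cons_tail_of_isDyck ha₁ hB₁ hd₁, eq_true_cons_tail_of_isDyck ha₂ hB₂ hd₂, hY]

def UUDUMarked (m : ℕ) : Type :=
  {p : List Bool × List Bool // IsDyck (p.1 ++ [true, true, false, true] ++ p.2) ∧
    (p.1 ++ [true, true, false, true] ++ p.2).length = m}

def toUUDU {m : ℕ} (x : LeftAsymPeak1Marked m) : UUDUMarked m :=
  ⟨(x.1.1 ++ replicate (x.1.2.1 - 2) true, x.1.2.2.tail), by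
    obtain ⟨⟨A, a, B⟩, ha, -, hB, hd, hl⟩ := x
    rw [← peakWord_eq_uudu ha (eq_true_cons_tail_of_isDyck ha hB hd)]
    exact ⟨hd, hl⟩⟩

lemma toUUDU_injective (m : ℕ) : Function.Injective (toUUDU (m := m)) := by
  rintro ⟨⟨A₁, a₁, B₁⟩, ha₁, hA₁, hB₁, hd₁, _⟩ ⟨⟨A₂, a₂, B₂⟩, ha₂, hA₂, hB₂, hd₂, _⟩ h
  obtain ⟨hX, hY⟩ := Prod.mk.inj (congrArg Subtype.val h)
  obtain ⟨rfl, rfl, rfl⟩ := peak_eq_of_uudu_eq ha₁ hA₁ hB₁ hd₁ ha₂ hA₂ hB₂ hd₂ hX hY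
  rfl

lemma toUUDU_surjective (m : ℕ) : Function.Surjective (toUUDU (m := m)) := by
  rintro ⟨⟨X, Y⟩, hd, hl⟩
  have hX := eq_rdropWhile_append_replicate X
  set A := X.rdropWhile id
  set k := (X.rtakeWhile id).length
  have hw : A ++ replicate (k + 2) true ++ [false] ++ true :: Y =
      X ++ [true, true, false, true] ++ Y := by
    rw [peakWord_eq_uudu (by omega) rfl, hX]
    rfl
  refine ⟨⟨(A, k + 2, true :: Y), Nat.le_add_left 2 k, getLast?_rdropWhile_ne X, by simp,
    hw ▸ hd, hw ▸ hl⟩, ?_⟩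
  exact Subtype.ext (by simp [toUUDU, ← hX])

def Words (L k : ℕ) : Type := {w : List Bool // w.length = L ∧ w.count false = k}

lemma count_false_eq_iff_height {w : List Bool} {n : ℕ} (hw : w.length = 2 * n + 3) :
    w.count false = n ↔ height w = 3 := by
  have := two_mul_count_false w
  rw [hw] at this
  push_cast at this
  omega

def uuduToWord (n : ℕ) (p : UUDUMarked (2 * (n + 3))) : Words (2 * n + 3) n :=
  ⟨revCompl p.1.1 ++ true :: revCompl p.1.2, by
    obtain ⟨⟨X, Y⟩, hd, hl⟩ := p
    have hlen : (revCompl X ++ true :: revCompl Y).length = 2 * n + 3 := by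
      simp only [append_assoc, cons_append, nil_append, length_append, length_cons,
        length_revCompl] at hl ⊢
      omega
    refine ⟨hlen, (count_false_eq_iff_height hlen).2 ?_⟩
    have := (isDyck_uudu_iff.1 hd).2.2
    simp only [height_append, height_revCompl, height_cons_true]
    linarith⟩

lemma uuduToWord_injective (n : ℕ) : Function.Injective (uuduToWord n) := by
  rintro ⟨⟨X₁, Y₁⟩, hd₁, _⟩ ⟨⟨X₂, Y₂⟩, hd₂, _⟩ h
  rw [isDyck_uudu_iff] at hd₁ hd₂
  obtain ⟨hX, hY⟩ := split_unique (congrArg Subtype.val h)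
    (endsAtMin_revCompl_iff.2 hd₁.1) (dyckNonneg_revCompl_iff.2 hd₁.2.1)
    (endsAtMin_revCompl_iff.2 hd₂.1) (dyckNonneg_revCompl_iff.2 hd₂.2.1)
  simp only [revCompl_injective.eq_iff] at hX hY
  subst hX hY
  rfl

lemma uuduToWord_surjective (n : ℕ) : Function.Surjective (uuduToWord n) := by
  rintro ⟨w, hl, hc⟩
  have h3 := (count_false_eq_iff_height hl).1 hc
  obtain ⟨P, Q, rfl, hP, hQ⟩ := exists_split_of_not_endsAtMin (w := w) fun h => by
    have := h [] nil_prefix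
    rw [height_nil] at this
    omega
  have hd : IsDyck (revCompl P ++ [true, true, false, true] ++ revCompl Q) := by
    refine isDyck_uudu_iff.2 ⟨dyckNonneg_revCompl_iff.2 hP, endsAtMin_revCompl_iff.2 hQ, ?_⟩
    simp only [height_append, height_cons_true, height_revCompl] at h3 ⊢
    linarith
  refine ⟨⟨(revCompl P, revCompl Q), hd, ?_⟩, Subtype.ext (by simp [uuduToWord])⟩
  simp only [length_append, length_cons, append_assoc, cons_append, nil_append,
    length_revCompl] at hl ⊢
  omega

instance (L k : ℕ) : Finite (Words L k) :=
  ((List.finite_length_eq Bool L).subset fun _ hw => hw.1).to_subtype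

lemma eq_replicate_true_of_count_false_eq_zero {w : List Bool} (hc : w.count false = 0) :
    w = replicate w.length true :=
  eq_replicate_iff.2 ⟨rfl, fun b hb => by cases b; exacts [absurd hb (count_eq_zero.1 hc), rfl]⟩

lemma card_words_zero (L : ℕ) : Nat.card (Words L 0) = 1 := by
  refine Nat.card_eq_one_iff_exists.2
    ⟨⟨replicate L true, by simp [count_replicate]⟩, fun ⟨w, hl, hc⟩ => Subtype.ext ?_⟩
  exact (eq_replicate_true_of_count_false_eq_zero hc).trans (by rw [hl])

lemma card_words_nil_succ (k : ℕ) : Nat.card (Words 0 (k + 1)) = 0 :=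
  have : IsEmpty (Words 0 (k + 1)) := ⟨fun ⟨w, hl, hc⟩ => by simp_all⟩
  Nat.card_of_isEmpty

def wordsSuccEquiv (L k : ℕ) : Words (L + 1) (k + 1) ≃ Words L (k + 1) ⊕ Words L k where
  toFun
    | ⟨true :: t, h⟩ => .inl ⟨t, by simpa using h⟩
    | ⟨false :: t, h⟩ => .inr ⟨t, by simpa using h⟩
  invFun
    | .inl ⟨t, h⟩ => ⟨true :: t, by simpa using h⟩
    | .inr ⟨t, h⟩ => ⟨false :: t, by simpa using h⟩
  left_inv
    | ⟨true :: _, _⟩ | ⟨false :: _, _⟩ => rfl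
  right_inv
    | .inl _ | .inr _ => rfl

lemma card_words (L k : ℕ) : Nat.card (Words L k) = L.choose k := by
  induction L generalizing k with
  | zero => cases k <;> simp [card_words_zero, card_words_nil_succ]
  | succ L ih =>
    cases k with
    | zero => simp [card_words_zero]
    | succ k =>
      rw [Nat.card_congr (wordsSuccEquiv L k), Nat.card_sum, ih, ih, Nat.choose_succ_succ,
        add_comm]

end LeftAsymPeak

/-- The number of Dyck paths of length 2(n+3) with a distinguished left asymmetric
peak of weight 1 equals binom(2n+3, n). -/
theorem left_asym_peak_count (n : ℕ) :
    Nat.card (LeftAsymPeak1Marked (2 * (n + 3))) = Nat.choose (2 * n + 3) n := by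
  rw [Nat.card_eq_of_bijective _
      ⟨LeftAsymPeak.toUUDU_injective _, LeftAsymPeak.toUUDU_surjective _⟩,
    Nat.card_eq_of_bijective _
      ⟨LeftAsymPeak.uuduToWord_injective n, LeftAsymPeak.uuduToWord_surjective n⟩,
    LeftAsymPeak.card_words]
end

section
/- The number of pairs (P, p) where P is a Dyck path of length 2(n+1) and p is a peak of P whose maximal mountain u^i d^j satisfies i ≥ j and min(i,j) = k+1 (a 'nonleft' peak of weight k+1) equals binom(2n-2k, n-k), for n ≥ k ≥ 0. -/
/-- Dyck paths of length `m` with a distinguished nonleft peak of weight `k+1`: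
a decomposition `A ++ u^a ++ d^{k+1} ++ B` with `a ≥ k+1` (so the maximal mountain
`u^a d^{k+1}` has `a ≥ k+1` and weight `min(a, k+1) = k+1`), where the runs are
maximal (`A` does not end with an up step, `B` does not start with a down step). -/
def NonleftPeakMarked (m k : ℕ) : Type :=
  { q : List Bool × ℕ × List Bool //
      k + 1 ≤ q.2.1 ∧
      q.1.getLast? ≠ some true ∧
      q.2.2.head? ≠ some false ∧
      IsDyck (q.1 ++ List.replicate q.2.1 true ++ List.replicate (k + 1) false ++ q.2.2) ∧
      (q.1 ++ List.replicate q.2.1 true ++ List.replicate (k + 1) false ++ q.2.2).length = m }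

namespace NonleftPeakAux

open List DyckStep

/-! ### Generic list lemmas -/

lemma prefix_append_cases' {α : Type*} {q A B : List α} (h : q <+: A ++ B) :
    q <+: A ∨ ∃ q', q' <+: B ∧ q = A ++ q' := by
  rcases Nat.le_total q.length A.length with hl | hl
  · exact Or.inl (List.prefix_of_prefix_length_le h (A.prefix_append B) hl)
  · have hA : A <+: q := List.prefix_of_prefix_length_le (A.prefix_append B) h hl
    obtain ⟨q', rfl⟩ := hA
    exact Or.inr ⟨q', (List.prefix_append_right_inj A).mp h, rfl⟩

lemma eq_replicate_of_prefix' {q : List Bool} {n : ℕ} {b : Bool}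
    (h : q <+: List.replicate n b) : q = List.replicate q.length b :=
  List.eq_replicate_length.mpr fun _ hx => List.eq_of_mem_replicate (h.subset hx)

lemma takeWhile_replicate_true (t : ℕ) (r : List Bool) :
    List.takeWhile id (List.replicate t true ++ r)
      = List.replicate t true ++ List.takeWhile id r := by
  induction t with
  | zero => simp
  | succ t ih => simp [List.replicate_succ, List.takeWhile_cons, ih]

lemma dropWhile_replicate_true (t : ℕ) (r : List Bool) :
    List.dropWhile id (List.replicate t true ++ r) = List.dropWhile id r := by
  induction t with
  | zero => simp
  | succ t ih => simp [List.replicate_succ, List.dropWhile_cons, ih]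

lemma takeWhile_eq_nil_of_head {l : List Bool} (h : l.head? ≠ some true) :
    List.takeWhile id l = [] := by
  cases l with
  | nil => rfl
  | cons b l => cases b; · simp [List.takeWhile_cons]
                · simp at h

lemma dropWhile_eq_self_of_head {l : List Bool} (h : l.head? ≠ some true) :
    List.dropWhile id l = l := by
  cases l with
  | nil => rfl
  | cons b l => cases b; · simp [List.dropWhile_cons]
                · simp at h

/-! ### Splitting a list at its trailing run of `true`s -/

/-- The length of the trailing run of `true`s. -/
def splitT (l : List Bool) : ℕ := (l.reverse.takeWhile id).length

/-- The list with its trailing run of `true`s removed. -/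
def splitA (l : List Bool) : List Bool := (l.reverse.dropWhile id).reverse

lemma splitA_append_splitT (l : List Bool) :
    splitA l ++ List.replicate (splitT l) true = l := by
  have h1 : List.takeWhile id l.reverse = List.replicate (splitT l) true := by
    refine List.eq_replicate_length.mpr fun x hx => ?_
    have := List.mem_takeWhile_imp hx
    simpa using this
  have h2 := List.takeWhile_append_dropWhile (p := id) (l := l.reverse)
  have := congrArg List.reverse h2
  rw [List.reverse_append, List.reverse_reverse, h1] at this
  rw [List.reverse_replicate] at this
  exact this

lemma splitA_getLast? (l : List Bool) : (splitA l).getLast? ≠ some true := by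
  rw [splitA, List.getLast?_reverse]
  have := List.head?_dropWhile_not id l.reverse
  intro hc
  rw [hc] at this
  simp at this

lemma splitA_spec {A : List Bool} {t : ℕ} (h : A.getLast? ≠ some true) :
    splitA (A ++ List.replicate t true) = A ∧ splitT (A ++ List.replicate t true) = t := by
  have hh : A.reverse.head? ≠ some true := by rwa [List.head?_reverse]
  have hrev : (A ++ List.replicate t true).reverse
      = List.replicate t true ++ A.reverse := by
    simp [List.reverse_append]
  constructor
  · rw [splitA, hrev, dropWhile_replicate_true, dropWhile_eq_self_of_head hh,
      List.reverse_reverse]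
  · rw [splitT, hrev, takeWhile_replicate_true, takeWhile_eq_nil_of_head hh]
    simp

/-! ### Removing the peak block `u^{k+1} d^{k+1}` preserves Dyckness -/

lemma isDyck_block_iff (A B : List Bool) (t k : ℕ) :
    IsDyck (A ++ (List.replicate (t + (k+1)) true ++ (List.replicate (k+1) false ++ B))) ↔
      IsDyck (A ++ (List.replicate t true ++ B)) := by
  constructor
  · rintro ⟨hnn, hc⟩
    have hA : A.count false ≤ A.count true := hnn A (A.prefix_append _)
    constructor
    · intro q hq
      rcases prefix_append_cases' hq with hqA | ⟨q', hq', rfl⟩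
      · exact hnn q (hqA.trans (A.prefix_append _))
      · rcases prefix_append_cases' hq' with hq'' | ⟨q'', hq'', rfl⟩
        · rw [eq_replicate_of_prefix' hq'']
          simp only [List.count_append, List.count_replicate]
          simp
          omega
        · have hP : A ++ (List.replicate (t + (k+1)) true ++ (List.replicate (k+1) false ++ q''))
              <+: A ++ (List.replicate (t + (k+1)) true ++ (List.replicate (k+1) false ++ B)) := by
            rw [List.prefix_append_right_inj, List.prefix_append_right_inj,
              List.prefix_append_right_inj]
            exact hq''
          have := hnn _ hP
          simp only [List.count_append, List.count_replicate] at this ⊢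
          simp at this ⊢
          omega
    · simp only [List.count_append, List.count_replicate] at hc ⊢
      simp at hc ⊢
      omega
  · rintro ⟨hnn, hc⟩
    have hA : A.count false ≤ A.count true := hnn A (A.prefix_append _)
    constructor
    · intro q hq
      rcases prefix_append_cases' hq with hqA | ⟨q', hq', rfl⟩
      · exact hnn q (hqA.trans (A.prefix_append _))
      · rcases prefix_append_cases' hq' with hq'' | ⟨q'', hq'', rfl⟩
        · rw [eq_replicate_of_prefix' hq'']
          simp only [List.count_append, List.count_replicate]
          simp
          omega
        · rcases prefix_append_cases' hq'' with hq3 | ⟨q₃, hq3, rfl⟩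
          · have hlen : q''.length ≤ k + 1 := by
              have := hq3.length_le; simpa using this
            rw [eq_replicate_of_prefix' hq3]
            simp only [List.count_append, List.count_replicate]
            simp
            omega
          · have hQ : A ++ (List.replicate t true ++ q₃)
                <+: A ++ (List.replicate t true ++ B) := by
              rw [List.prefix_append_right_inj, List.prefix_append_right_inj]
              exact hq3
            have := hnn _ hQ
            simp only [List.count_append, List.count_replicate] at this ⊢
            simp at this ⊢
            omega
    · simp only [List.count_append, List.count_replicate] at hc ⊢
      simp at hc ⊢
      omega

/-! ### Counting marked positions in a fixed Dyck path -/

lemma sum_pos_count (q : List Bool) :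
    (∑ i ∈ Finset.range (q.length + 1),
        if (q.drop i).head? ≠ some false then 1 else 0) = q.count true + 1 := by
  induction q with
  | nil => simp
  | cons b l ih =>
    rw [List.length_cons, Finset.sum_range_succ']
    simp only [List.drop_succ_cons, List.drop_zero, List.head?_cons]
    rw [ih]
    cases b <;> simp [List.count_cons]

lemma card_pos_filter (q : List Bool) :
    ((Finset.range (q.length + 1)).filter
        (fun i => (q.drop i).head? ≠ some false)).card = q.count true + 1 := by
  rw [Finset.card_filter]
  exact sum_pos_count q

/-! ### Dyck paths as `Bool` lists vs mathlib `DyckWord`s -/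

def boolToStep (b : Bool) : DyckStep := bif b then U else D
def stepToBool (s : DyckStep) : Bool := match s with | U => true | D => false

@[simp] lemma stepToBool_boolToStep (b : Bool) : stepToBool (boolToStep b) = b := by
  cases b <;> rfl
@[simp] lemma boolToStep_stepToBool (s : DyckStep) : boolToStep (stepToBool s) = s := by
  cases s <;> rfl

lemma count_U_map (l : List Bool) : (l.map boolToStep).count U = l.count true := by
  induction l with
  | nil => rfl
  | cons b l ih => cases b <;> simp [boolToStep, List.count_cons, ih]

lemma count_D_map (l : List Bool) : (l.map boolToStep).count D = l.count false := by
  induction l with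
  | nil => rfl
  | cons b l ih => cases b <;> simp [boolToStep, List.count_cons, ih]

lemma count_true_map (l : List DyckStep) : (l.map stepToBool).count true = l.count U := by
  induction l with
  | nil => rfl
  | cons s l ih => cases s <;> simp [stepToBool, List.count_cons, ih]

lemma count_false_map (l : List DyckStep) : (l.map stepToBool).count false = l.count D := by
  induction l with
  | nil => rfl
  | cons s l ih => cases s <;> simp [stepToBool, List.count_cons, ih]

noncomputable def dyckListEquiv (m : ℕ) :
    {q : List Bool // IsDyck q ∧ q.length = 2 * m} ≃
      {p : DyckWord // p.semilength = m} where
  toFun := fun q =>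
    ⟨⟨q.1.map boolToStep, by rw [count_U_map, count_D_map, q.2.1.2], by
        intro i
        rw [← List.map_take, count_U_map, count_D_map]
        exact q.2.1.1 _ (q.1.take_prefix i)⟩, by
      have h2 := List.count_true_add_count_false q.1
      have h3 := q.2.1.2
      have h4 := q.2.2
      show (q.1.map boolToStep).count U = m
      rw [count_U_map]
      omega⟩
  invFun := fun p =>
    ⟨p.1.toList.map stepToBool, ⟨by
        intro q hq
        rw [List.prefix_iff_eq_take] at hq
        rw [hq, ← List.map_take, count_true_map, count_false_map]
        exact p.1.count_D_le_count_U _, by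
        rw [count_true_map, count_false_map]; exact p.1.count_U_eq_count_D⟩, by
      have := p.1.two_mul_semilength_eq_length
      rw [List.length_map, ← this, p.2]⟩
  left_inv := fun q => by
    apply Subtype.ext
    simp [List.map_map, Function.comp_def]
  right_inv := fun p => by
    apply Subtype.ext
    apply DyckWord.ext
    simp [List.map_map, Function.comp_def]

/-! ### Cardinality of marked Dyck paths -/

noncomputable def fibEquiv (m : ℕ) (Q : {q : List Bool // IsDyck q ∧ q.length = 2 * m}) :
    {i : ℕ // i ≤ 2 * m ∧ ((Q.1.drop i).head? ≠ some false)} ≃ Fin (m + 1) := by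
  have hl : Q.1.length = 2 * m := Q.2.2
  have hcnt : Q.1.count true = m := by
    have h1 := List.count_true_add_count_false Q.1
    have h2 := Q.2.1.2
    omega
  refine ((Equiv.subtypeEquivRight ?_).trans
    ((Finset.range (Q.1.length + 1)).filter
        (fun i => (Q.1.drop i).head? ≠ some false)).equivFin).trans
    (finCongr ?_)
  · intro i
    simp only [Finset.mem_filter, Finset.mem_range, Nat.lt_succ_iff, hl]
  · rw [card_pos_filter, hcnt]

def sEquiv (m : ℕ) :
    {x : List Bool × ℕ // IsDyck x.1 ∧ x.1.length = 2 * m ∧ x.2 ≤ 2 * m ∧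
        ((x.1.drop x.2).head? ≠ some false)} ≃
      Σ Q : {q : List Bool // IsDyck q ∧ q.length = 2 * m},
        {i : ℕ // i ≤ 2 * m ∧ ((Q.1.drop i).head? ≠ some false)} where
  toFun := fun x => ⟨⟨x.1.1, x.2.1, x.2.2.1⟩, ⟨x.1.2, x.2.2.2.1, x.2.2.2.2⟩⟩
  invFun := fun y => ⟨(y.1.1, y.2.1), y.1.2.1, y.1.2.2, y.2.2.1, y.2.2.2⟩
  left_inv := fun _ => rfl
  right_inv := fun _ => rfl

lemma card_S (m : ℕ) :
    Nat.card {x : List Bool × ℕ // IsDyck x.1 ∧ x.1.length = 2 * m ∧ x.2 ≤ 2 * m ∧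
        ((x.1.drop x.2).head? ≠ some false)} = catalan m * (m + 1) := by
  rw [Nat.card_congr ((sEquiv m).trans
    ((Equiv.sigmaCongrRight (fibEquiv m)).trans (Equiv.sigmaEquivProd _ _)))]
  rw [Nat.card_prod, Nat.card_congr (dyckListEquiv m), Nat.card_eq_fintype_card,
    DyckWord.card_dyckWord_semilength_eq_catalan]
  simp

/-! ### The main bijection -/

noncomputable def mainEquiv (n k : ℕ) (h : k ≤ n) :
    NonleftPeakMarked (2 * (n + 1)) k ≃
      {x : List Bool × ℕ // IsDyck x.1 ∧ x.1.length = 2 * (n - k) ∧ x.2 ≤ 2 * (n - k) ∧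
        ((x.1.drop x.2).head? ≠ some false)} where
  toFun := fun x => by
    refine ⟨(x.1.1 ++ (List.replicate (x.1.2.1 - (k+1)) true ++ x.1.2.2),
      x.1.1.length + (x.1.2.1 - (k+1))), ?_, ?_, ?_, ?_⟩
    · obtain ⟨hk1, hA, hB, hD, hL⟩ := x.2
      refine (isDyck_block_iff x.1.1 x.1.2.2 (x.1.2.1 - (k+1)) k).mp ?_
      have ha : x.1.2.1 - (k+1) + (k+1) = x.1.2.1 := Nat.sub_add_cancel hk1
      rw [ha]
      simpa [List.append_assoc] using hD
    · obtain ⟨hk1, hA, hB, hD, hL⟩ := x.2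
      simp only [List.length_append, List.length_replicate] at hL ⊢
      omega
    · obtain ⟨hk1, hA, hB, hD, hL⟩ := x.2
      simp only [List.length_append, List.length_replicate] at hL ⊢
      omega
    · obtain ⟨hk1, hA, hB, hD, hL⟩ := x.2
      have : (x.1.1 ++ (List.replicate (x.1.2.1 - (k+1)) true ++ x.1.2.2)).drop
          (x.1.1.length + (x.1.2.1 - (k+1))) = x.1.2.2 := by
        rw [← List.append_assoc]
        exact List.drop_left' (by simp)
      rw [this]
      exact hB
  invFun := fun y => by
    refine ⟨(splitA (y.1.1.take y.1.2), splitT (y.1.1.take y.1.2) + (k+1), y.1.1.drop y.1.2),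
      Nat.le_add_left (k+1) _, splitA_getLast? _, ?_, ?_, ?_⟩
    · obtain ⟨hD, hl, hi, hB⟩ := y.2
      exact hB
    · obtain ⟨hD, hl, hi, hB⟩ := y.2
      have hglue : splitA (y.1.1.take y.1.2) ++
          (List.replicate (splitT (y.1.1.take y.1.2)) true ++ y.1.1.drop y.1.2) = y.1.1 := by
        rw [← List.append_assoc, splitA_append_splitT, List.take_append_drop]
      show IsDyck _
      simp only [List.append_assoc]
      rw [isDyck_block_iff, hglue]
      exact hD
    · obtain ⟨hD, hl, hi, hB⟩ := y.2
      have hglue := congrArg List.length (splitA_append_splitT (y.1.1.take y.1.2))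
      simp only [List.length_append, List.length_replicate, List.length_take] at hglue
      simp only [List.length_append, List.length_replicate, List.length_drop]
      omega
  left_inv := fun x => by
    obtain ⟨⟨A, a, B⟩, hk1, hA, hB, hD, hL⟩ := x
    apply Subtype.ext
    have ht : (A ++ (List.replicate (a - (k+1)) true ++ B)).take (A.length + (a - (k+1)))
        = A ++ List.replicate (a - (k+1)) true := by
      rw [← List.append_assoc]
      exact List.take_left' (by simp)
    have hd : (A ++ (List.replicate (a - (k+1)) true ++ B)).drop (A.length + (a - (k+1)))
        = B := by
      rw [← List.append_assoc]
      exact List.drop_left' (by simp)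
    obtain ⟨h1, h2⟩ := splitA_spec (A := A) (t := a - (k+1)) hA
    show (splitA _, splitT _ + (k+1), _) = (A, a, B)
    rw [ht, hd, h1, h2, Nat.sub_add_cancel hk1]
  right_inv := fun y => by
    obtain ⟨⟨q, i⟩, hD, hl, hi, hB⟩ := y
    apply Subtype.ext
    show (splitA (q.take i) ++ (List.replicate (splitT (q.take i) + (k+1) - (k+1)) true ++
        q.drop i), (splitA (q.take i)).length + (splitT (q.take i) + (k+1) - (k+1))) = (q, i)
    rw [Nat.add_sub_cancel]
    have hglue : splitA (q.take i) ++ (List.replicate (splitT (q.take i)) true ++ q.drop i)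
        = q := by
      rw [← List.append_assoc, splitA_append_splitT, List.take_append_drop]
    rw [hglue]
    have hl' : q.length = 2 * (n - k) := hl
    have hi' : i ≤ 2 * (n - k) := hi
    have hiq : i ≤ q.length := by omega
    have h5 : (splitA (q.take i)).length + splitT (q.take i) = i := by
      have := congrArg List.length (splitA_append_splitT (q.take i))
      rwa [List.length_append, List.length_replicate, List.length_take,
        min_eq_left hiq] at this
    rw [h5]

end NonleftPeakAux

/-- The number of pairs (P, p) with P a Dyck path of length 2(n+1) and p a nonleft
peak of P of weight k+1 equals binom(2n-2k, n-k), for n ≥ k ≥ 0. -/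
theorem nonleft_peak_count (n k : ℕ) (h : k ≤ n) :
    Nat.card (NonleftPeakMarked (2 * (n + 1)) k)
      = Nat.choose (2 * n - 2 * k) (n - k) := by
  rw [Nat.card_congr (NonleftPeakAux.mainEquiv n k h), NonleftPeakAux.card_S]
  have h2 : 2 * n - 2 * k = 2 * (n - k) := by omega
  rw [h2, ← Nat.centralBinom_eq_two_mul_choose, catalan_eq_centralBinom_div,
    Nat.div_mul_cancel (Nat.succ_dvd_centralBinom (n - k))]
end
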